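/- arXiv:2402.01320 — 4 statements merged into one kernel-verified Lean document; each statement's English description precedes it below -/
import Mathlib

section
/- There exists a constant C_L ∈ (0,∞), depending only on B, B_L, C_V and M, such that for every probability space (Ω,ℙ), all square-integrable random vectors X₁, X₂ : Ω → E with laws μ₁, μ₂ respectively, and all z₁, z₂ ∈ E, one has ‖R^h_{μ₁}(z₁) − R^h_{μ₂}(z₂)‖ ≤ C_L·(‖z₁ − z₂‖ + (E‖X₁ − X₂‖²)^{1/2}). (This is the coupling form of the Lipschitz property of the SVGD drift in the point and the measure; it implies the Wasserstein-2 form since the Wasserstein-2 distance is the infimum over couplings.) -/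
/-!
The integrand `(x, z) ↦ k(x,z) • h(x) + ∇₁k(x,z)` of the drift is Lipschitz in both arguments
jointly (for the sum of the distances), with constant `B_L (C_V + 1) + B M`. Pulling both drifts
back to `Ω` along `X₁`, `X₂` turns their difference into one integral over the coupling, bounded by
that constant times `‖z₁ - z₂‖ + 𝔼‖X₁ - X₂‖`; finally `𝔼‖X₁ - X₂‖ ≤ (𝔼‖X₁ - X₂‖²)^{1/2}` because
a variance is nonnegative.
-/

open MeasureTheory ProbabilityTheory
open scoped ENNReal

noncomputable section

/-- Euclidean space `ℝ^d`. -/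
abbrev Euc (d : ℕ) := EuclideanSpace ℝ (Fin d)

/-- The SVGD drift `R^h_μ(z) = −∫ (k(x,z)·h(x) + ∇₁k(x,z)) dμ(x)`. -/
def drift {d : ℕ} (k : Euc d → Euc d → ℝ) (gk : Euc d → Euc d → Euc d)
    (h : Euc d → Euc d) (μ : Measure (Euc d)) (z : Euc d) : Euc d :=
  -∫ x, (k x z • h x + gk x z) ∂μ

/-- Assumptions on the kernel `k` and its first-argument gradient `gk`:
differentiability, boundedness by `B` and `B_L`-Lipschitz continuity. -/
def KernelAssumptions {d : ℕ} (B BL : ℝ) (k : Euc d → Euc d → ℝ)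
    (gk : Euc d → Euc d → Euc d) : Prop :=
  (∀ x y, HasGradientAt (fun x' => k x' y) (gk x y) x) ∧
  (∀ x y, |k x y| ≤ B) ∧ (∀ x y, ‖gk x y‖ ≤ B) ∧
  (∀ x x' y y', |k x x' - k y y'| ≤ BL * (‖x - y‖ + ‖x' - y'‖)) ∧
  (∀ x x' y y', ‖gk x x' - gk y y'‖ ≤ BL * (‖x - y‖ + ‖x' - y'‖))

/-- A potential gradient: bounded by `CV` and `M`-Lipschitz. -/
def PotGrad {d : ℕ} (CV M : ℝ) (h : Euc d → Euc d) : Prop :=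
  (∀ x, ‖h x‖ ≤ CV) ∧ (∀ x y, ‖h x - h y‖ ≤ M * ‖x - y‖)

theorem integral_le_sqrt_integral_sq {Ω : Type*} [MeasurableSpace Ω] {P : Measure Ω}
    [IsProbabilityMeasure P] {g : Ω → ℝ} (hg : MemLp g 2 P) :
    ∫ ω, g ω ∂P ≤ Real.sqrt (∫ ω, g ω ^ 2 ∂P) := by
  have hvar := variance_nonneg g P
  rw [variance_eq_sub hg, sub_nonneg] at hvar
  exact Real.le_sqrt_of_sq_le hvar

section JointlyLipschitz

variable {Ω E F : Type*} [MeasurableSpace Ω] {P : Measure Ω}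
  [NormedAddCommGroup E] [NormedAddCommGroup F] {f : E → E → F} {L : ℝ}

theorem continuous_left_of_norm_sub_le
    (hf : ∀ x y z w, ‖f x z - f y w‖ ≤ L * (‖x - y‖ + ‖z - w‖)) (z : E) :
    Continuous (f · z) :=
  (LipschitzWith.of_dist_le' fun x y => by simpa [dist_eq_norm] using hf x y z z).continuous

variable [MeasurableSpace E] [OpensMeasurableSpace E] [SecondCountableTopology E]

theorem integrable_comp_of_norm_sub_le [IsFiniteMeasure P]
    (hf : ∀ x y z w, ‖f x z - f y w‖ ≤ L * (‖x - y‖ + ‖z - w‖))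
    {X : Ω → E} (hXm : Measurable X) (hX : Integrable X P) (z : E) :
    Integrable (fun ω => f (X ω) z) P := by
  have hmeas : AEStronglyMeasurable (fun ω => f (X ω) z) P :=
    ((continuous_left_of_norm_sub_le hf z).stronglyMeasurable.comp_measurable hXm)
      |>.aestronglyMeasurable
  refine ((hX.norm.const_mul L).add (integrable_const ‖f 0 z‖)).mono' hmeas
    (ae_of_all _ fun ω => ?_)
  calc ‖f (X ω) z‖ ≤ ‖f (X ω) z - f 0 z‖ + ‖f 0 z‖ := norm_le_norm_sub_add _ _
    _ ≤ L * ‖X ω‖ + ‖f 0 z‖ := by simpa using hf (X ω) 0 z z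

theorem norm_integral_comp_sub_integral_comp_le [NormedSpace ℝ F] [IsProbabilityMeasure P]
    (hf : ∀ x y z w, ‖f x z - f y w‖ ≤ L * (‖x - y‖ + ‖z - w‖))
    {X₁ X₂ : Ω → E} (hX₁m : Measurable X₁) (hX₂m : Measurable X₂)
    (hX₁ : Integrable X₁ P) (hX₂ : Integrable X₂ P) (z₁ z₂ : E) :
    ‖∫ ω, f (X₁ ω) z₁ ∂P - ∫ ω, f (X₂ ω) z₂ ∂P‖ ≤
      L * (‖z₁ - z₂‖ + ∫ ω, ‖X₁ ω - X₂ ω‖ ∂P) := by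
  have hdist : Integrable (fun ω => ‖X₁ ω - X₂ ω‖) P := (hX₁.sub hX₂).norm
  rw [← integral_sub (integrable_comp_of_norm_sub_le hf hX₁m hX₁ z₁)
    (integrable_comp_of_norm_sub_le hf hX₂m hX₂ z₂)]
  calc ‖∫ ω, (f (X₁ ω) z₁ - f (X₂ ω) z₂) ∂P‖
      ≤ ∫ ω, L * (‖z₁ - z₂‖ + ‖X₁ ω - X₂ ω‖) ∂P :=
        norm_integral_le_of_norm_le (((integrable_const _).add hdist).const_mul L)
          (ae_of_all _ fun ω => (hf _ _ _ _).trans_eq (by rw [add_comm]))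
    _ = L * (‖z₁ - z₂‖ + ∫ ω, ‖X₁ ω - X₂ ω‖ ∂P) := by
        rw [integral_const_mul, integral_add (integrable_const _) hdist, integral_const,
          probReal_univ, one_smul]

end JointlyLipschitz

section SvgdIntegrand

variable {E F : Type*} [NormedAddCommGroup E] [NormedAddCommGroup F] [NormedSpace ℝ F]

def svgdIntegrand (k : E → E → ℝ) (gk : E → E → F) (h : E → F) (x z : E) : F :=
  k x z • h x + gk x z

theorem norm_svgdIntegrand_sub_le {k : E → E → ℝ} {gk : E → E → F} {h : E → F}
    {B BL CV M : ℝ} (hkB : ∀ x y, |k x y| ≤ B)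
    (hkL : ∀ x x' y y', |k x x' - k y y'| ≤ BL * (‖x - y‖ + ‖x' - y'‖))
    (hgkL : ∀ x x' y y', ‖gk x x' - gk y y'‖ ≤ BL * (‖x - y‖ + ‖x' - y'‖))
    (hhB : ∀ x, ‖h x‖ ≤ CV) (hhL : ∀ x y, ‖h x - h y‖ ≤ M * ‖x - y‖) (hM : 0 ≤ M)
    (x y z w : E) :
    ‖svgdIntegrand k gk h x z - svgdIntegrand k gk h y w‖ ≤
      (BL * (CV + 1) + B * M) * (‖x - y‖ + ‖z - w‖) := by
  have hB : 0 ≤ B := (abs_nonneg _).trans (hkB x z)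
  have hsplit : svgdIntegrand k gk h x z - svgdIntegrand k gk h y w =
      (k x z - k y w) • h x + k y w • (h x - h y) + (gk x z - gk y w) := by
    simp only [svgdIntegrand, sub_smul, smul_sub]; abel
  calc ‖svgdIntegrand k gk h x z - svgdIntegrand k gk h y w‖
      ≤ |k x z - k y w| * ‖h x‖ + |k y w| * ‖h x - h y‖ + ‖gk x z - gk y w‖ := by
        rw [hsplit, ← Real.norm_eq_abs, ← Real.norm_eq_abs, ← norm_smul, ← norm_smul]
        exact norm_add₃_le
    _ ≤ BL * (‖x - y‖ + ‖z - w‖) * CV + B * (M * ‖x - y‖) + BL * (‖x - y‖ + ‖z - w‖) := by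
        gcongr
        · exact (abs_nonneg _).trans (hkL x z y w)
        exacts [hkL x z y w, hhB x, hkB y w, hhL x y, hgkL x z y w]
    _ ≤ (BL * (CV + 1) + B * M) * (‖x - y‖ + ‖z - w‖) := by
        nlinarith [mul_nonneg (mul_nonneg hB hM) (norm_nonneg (z - w))]

end SvgdIntegrand

theorem drift_map_eq {d : ℕ} {k : Euc d → Euc d → ℝ} {gk : Euc d → Euc d → Euc d}
    {h : Euc d → Euc d} {Ω : Type*} [MeasurableSpace Ω] (P : Measure Ω) {X : Ω → Euc d}
    (hX : Measurable X) {z : Euc d} (hc : Continuous fun x => svgdIntegrand k gk h x z) :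
    drift k gk h (P.map X) z = -∫ ω, svgdIntegrand k gk h (X ω) z ∂P :=
  congrArg Neg.neg (integral_map hX.aemeasurable hc.aestronglyMeasurable)

/-- Coupling form of the Lipschitz property of the SVGD drift in the point and
the measure (Lemma 14 of [Korba et al.]). -/
theorem drift_lipschitz_coupling (B BL CV M : ℝ)
    (hB : 0 < B) (hBL : 0 < BL) (hCV : 0 < CV) (hM : 0 < M) :
    ∃ CL : ℝ, 0 < CL ∧
      ∀ (d : ℕ), 0 < d →
      ∀ (k : Euc d → Euc d → ℝ) (gk : Euc d → Euc d → Euc d),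
        KernelAssumptions B BL k gk →
      ∀ (h : Euc d → Euc d), PotGrad CV M h →
      ∀ (Ω : Type) [MeasurableSpace Ω] (P : Measure Ω) [IsProbabilityMeasure P],
      ∀ (X₁ X₂ : Ω → Euc d), Measurable X₁ → Measurable X₂ →
        MemLp X₁ 2 P → MemLp X₂ 2 P →
      ∀ z₁ z₂ : Euc d,
        ‖drift k gk h (P.map X₁) z₁ - drift k gk h (P.map X₂) z₂‖ ≤
          CL * (‖z₁ - z₂‖ + Real.sqrt (∫ ω, ‖X₁ ω - X₂ ω‖ ^ 2 ∂P)) := by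
  refine ⟨BL * (CV + 1) + B * M, by positivity, ?_⟩
  intro d _ k gk hK h hh Ω _ P _ X₁ X₂ hX₁m hX₂m hX₁ hX₂ z₁ z₂
  obtain ⟨-, hkB, -, hkL, hgkL⟩ := hK
  have hlip := norm_svgdIntegrand_sub_le hkB hkL hgkL hh.1 hh.2 hM.le
  rw [drift_map_eq P hX₁m (continuous_left_of_norm_sub_le hlip z₁),
    drift_map_eq P hX₂m (continuous_left_of_norm_sub_le hlip z₂), neg_sub_neg, norm_sub_rev]
  calc _ ≤ (BL * (CV + 1) + B * M) * (‖z₁ - z₂‖ + ∫ ω, ‖X₁ ω - X₂ ω‖ ∂P) :=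
        norm_integral_comp_sub_integral_comp_le hlip hX₁m hX₂m
        (hX₁.integrable one_le_two) (hX₂.integrable one_le_two) z₁ z₂
    _ ≤ _ := by
        gcongr
        exact integral_le_sqrt_integral_sq (hX₁.sub hX₂).norm

end
end

section
/- There exists a constant A > 0, depending only on B, B_L, C_V and M, such that for every T > 0, every N ≥ 2, every interacting SVGD system (X_n^{(i)}) with N particles and potential gradient h together with its mirrored mean-field particles (Z_n^{(j)}), and every n ∈ ℕ with n·γ ≤ T: ((1/N)·Σ_{j=1}^N E‖X_n^{(j)} − Z_n^{(j)}‖²)^{1/2} ≤ (1/2)·(Var(ρ₀)^{1/2}/√N)·e^{A·T}·(e^{2·A·T} − 1), where m(ρ₀) := ∫_E x dρ₀(x) and Var(ρ₀) := ∫_E ‖x − m(ρ₀)‖² dρ₀(x). -/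
/-!
Write `Δₙⁱ = Xₙⁱ - Zₙⁱ`. The drift integrand `F(x, z) = k(x, z) h(x) + ∇₁k(x, z)` is bounded
and jointly Lipschitz, so one step changes `Δₙⁱ` by at most `γL (|Δₙⁱ| + (1/N) Σⱼ |Δₙʲ|)` plus
`γ` times the fluctuation `(1/N) Σⱼ (F(Zₙʲ, Zₙⁱ) - ∫ F(·, Zₙⁱ) dρₙ)` of the mirrored particles,
which are i.i.d. with law `ρₙ`. By independence and centring, only the diagonal terms `j = j'`
and the terms with `j = i` survive in the second moment of the fluctuation, which is therefore
`O(L² Var(ρₙ) / N)`. Minkowski's inequality in `L²(P; ℓ²)` gives the linear recursion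
`eₙ₊₁ ≤ (1 + 2γL) eₙ + γ √(8 L² Var ρₙ)` for `eₙ² = Σᵢ 𝔼|Δₙⁱ|²`, and `Var ρₙ` grows at most
like `(1 + γL)^{2n}` because the mean-field map is `(1 + γL)`-Lipschitz. A discrete Grönwall
argument concludes.
-/

open MeasureTheory ProbabilityTheory
open scoped ENNReal

noncomputable section

/-- The mean-field SVGD measures: `ρ₀` and
`ρ_{n+1} = (id − γ·R^h_{ρ_n})_♯ ρ_n`. -/
def mfSeq {d : ℕ} (γ : ℝ) (k : Euc d → Euc d → ℝ) (gk : Euc d → Euc d → Euc d)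
    (h : Euc d → Euc d) (ρ₀ : Measure (Euc d)) : ℕ → Measure (Euc d)
  | 0 => ρ₀
  | n + 1 => (mfSeq γ k gk h ρ₀ n).map
      (fun z => z - γ • drift k gk h (mfSeq γ k gk h ρ₀ n) z)

/-- Empirical measure of the first `N` points of `pts`. -/
def empMeas {d : ℕ} (N : ℕ) (pts : ℕ → Euc d) : Measure (Euc d) :=
  (N : ℝ≥0∞)⁻¹ • ∑ j ∈ Finset.range N, Measure.dirac (pts j)

/-- Mean of a measure. -/
def meanMeas {d : ℕ} (μ : Measure (Euc d)) : Euc d := ∫ x, x ∂μ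

/-- Variance of a measure. -/
def varMeas {d : ℕ} (μ : Measure (Euc d)) : ℝ := ∫ x, ‖x - meanMeas μ‖ ^ 2 ∂μ

/-- An interacting SVGD particle system with `N` particles, step size `γ`,
potential gradient `h` and i.i.d. initialization with law `ρ₀`. -/
def IsInteracting {d : ℕ} (γ : ℝ) (k : Euc d → Euc d → ℝ) (gk : Euc d → Euc d → Euc d)
    (h : Euc d → Euc d) (ρ₀ : Measure (Euc d)) (N : ℕ)
    {Ω : Type} [MeasurableSpace Ω] (P : Measure Ω) (X : ℕ → ℕ → Ω → Euc d) : Prop :=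
  (∀ n i, Measurable (X n i)) ∧
  iIndepFun
    (fun i : Fin N => X 0 i) P ∧
  (∀ i < N, P.map (X 0 i) = ρ₀) ∧
  (∀ n, ∀ i < N, ∀ ω, X (n + 1) i ω =
      X n i ω - γ • drift k gk h (empMeas N (fun j => X n j ω)) (X n i ω))

open scoped RealInnerProductSpace

section L2

variable {Ω ι : Type*} [MeasurableSpace Ω] {P : Measure Ω}

theorem integral_mul_le_sqrt_mul_sqrt {f g : Ω → ℝ} (hf0 : 0 ≤ f) (hg0 : 0 ≤ g)
    (hf : MemLp f 2 P) (hg : MemLp g 2 P) :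
    ∫ ω, f ω * g ω ∂P ≤ √(∫ ω, f ω ^ 2 ∂P) * √(∫ ω, g ω ^ 2 ∂P) := by
  have h := integral_mul_le_Lp_mul_Lq_of_nonneg Real.HolderConjugate.two_two
    (ae_of_all P hf0) (ae_of_all P hg0) (by simpa using hf) (by simpa using hg)
  simpa only [Real.rpow_two, ← Real.sqrt_eq_rpow] using h

def ensembleNorm (P : Measure Ω) (s : Finset ι) (f : ι → Ω → ℝ) : ℝ :=
  √(∑ i ∈ s, ∫ ω, f i ω ^ 2 ∂P)

variable {s : Finset ι} {f g : ι → Ω → ℝ}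

theorem ensembleNorm_add_le (hf0 : ∀ i, 0 ≤ f i) (hg0 : ∀ i, 0 ≤ g i)
    (hf : ∀ i ∈ s, MemLp (f i) 2 P) (hg : ∀ i ∈ s, MemLp (g i) 2 P) :
    ensembleNorm P s (fun i ω => f i ω + g i ω) ≤ ensembleNorm P s f + ensembleNorm P s g := by
  set a := ∑ i ∈ s, ∫ ω, f i ω ^ 2 ∂P
  set b := ∑ i ∈ s, ∫ ω, g i ω ^ 2 ∂P
  have ha : 0 ≤ a := Finset.sum_nonneg fun i _ => integral_nonneg fun ω => sq_nonneg _
  have hb : 0 ≤ b := Finset.sum_nonneg fun i _ => integral_nonneg fun ω => sq_nonneg _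
  have hcross : ∑ i ∈ s, ∫ ω, f i ω * g i ω ∂P ≤ √a * √b :=
    (Finset.sum_le_sum fun i hi =>
      integral_mul_le_sqrt_mul_sqrt (hf0 i) (hg0 i) (hf i hi) (hg i hi)).trans
      (Real.sum_sqrt_mul_sqrt_le s (fun i => integral_nonneg fun ω => sq_nonneg _)
        fun i => integral_nonneg fun ω => sq_nonneg _)
  have hexpand : ∑ i ∈ s, ∫ ω, (f i ω + g i ω) ^ 2 ∂P
      = a + 2 * ∑ i ∈ s, ∫ ω, f i ω * g i ω ∂P + b := by
    simp only [a, b, Finset.mul_sum, ← Finset.sum_add_distrib]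
    refine Finset.sum_congr rfl fun i hi => ?_
    have hf2 := (hf i hi).integrable_sq
    have hg2 := (hg i hi).integrable_sq
    have hfg : Integrable (fun ω => 2 * (f i ω * g i ω)) P :=
      ((hf i hi).integrable_mul (hg i hi)).const_mul 2
    calc ∫ ω, (f i ω + g i ω) ^ 2 ∂P
        = ∫ ω, (f i ω ^ 2 + 2 * (f i ω * g i ω)) + g i ω ^ 2 ∂P := by congr 1; ext ω; ring
      _ = _ := by
          rw [integral_add (f := fun ω => f i ω ^ 2 + 2 * (f i ω * g i ω)) (hf2.add hfg) hg2,
            integral_add hf2 hfg, integral_const_mul]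
  refine Real.sqrt_le_iff.mpr ⟨by unfold ensembleNorm; positivity, ?_⟩
  rw [hexpand, ensembleNorm, ensembleNorm, add_sq, Real.sq_sqrt ha, Real.sq_sqrt hb]
  linarith

theorem ensembleNorm_mono (hf0 : ∀ i, 0 ≤ f i) (hfg : ∀ i ∈ s, f i ≤ g i)
    (hg : ∀ i ∈ s, MemLp (g i) 2 P) : ensembleNorm P s f ≤ ensembleNorm P s g :=
  Real.sqrt_le_sqrt <| Finset.sum_le_sum fun i hi =>
    integral_mono_of_nonneg (ae_of_all P fun _ => sq_nonneg _) (hg i hi).integrable_sq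
      (ae_of_all P fun ω => pow_le_pow_left₀ (hf0 i ω) (hfg i hi ω) 2)

theorem ensembleNorm_const_mul {c : ℝ} (hc : 0 ≤ c) (f : ι → Ω → ℝ) :
    ensembleNorm P s (fun i ω => c * f i ω) = c * ensembleNorm P s f := by
  simp only [ensembleNorm, mul_pow, integral_const_mul, ← Finset.mul_sum]
  rw [Real.sqrt_mul (sq_nonneg c), Real.sqrt_sq hc]

theorem ensembleNorm_average_le (hf : ∀ j ∈ s, MemLp (f j) 2 P) :
    ensembleNorm P s (fun _ ω => (s.card : ℝ)⁻¹ * ∑ j ∈ s, f j ω) ≤ ensembleNorm P s f := by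
  rcases s.eq_empty_or_nonempty with rfl | hs
  · simp [ensembleNorm]
  have hcard : (0 : ℝ) < s.card := by exact_mod_cast hs.card_pos
  have hint : Integrable (fun ω => ∑ j ∈ s, f j ω ^ 2) P :=
    integrable_finsetSum _ fun j hj => (hf j hj).integrable_sq
  refine Real.sqrt_le_sqrt ?_
  rw [Finset.sum_const, nsmul_eq_mul, ← integral_finsetSum _ fun j hj => (hf j hj).integrable_sq]
  calc _ ≤ (s.card : ℝ) * ∫ ω, (s.card : ℝ)⁻¹ * ∑ j ∈ s, f j ω ^ 2 ∂P := by
        refine mul_le_mul_of_nonneg_left (integral_mono_of_nonneg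
          (ae_of_all P fun ω => sq_nonneg _) (hint.const_mul _) (ae_of_all P fun ω => ?_)) hcard.le
        have := sq_sum_le_card_mul_sum_sq (s := s) (f := fun j => f j ω)
        calc ((s.card : ℝ)⁻¹ * ∑ j ∈ s, f j ω) ^ 2
            = (s.card : ℝ)⁻¹ ^ 2 * (∑ j ∈ s, f j ω) ^ 2 := by ring
          _ ≤ (s.card : ℝ)⁻¹ ^ 2 * (s.card * ∑ j ∈ s, f j ω ^ 2) := by gcongr
          _ = (s.card : ℝ)⁻¹ * ∑ j ∈ s, f j ω ^ 2 := by field_simp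
    _ = ∫ ω, ∑ j ∈ s, f j ω ^ 2 ∂P := by
        rw [integral_const_mul, ← mul_assoc, mul_inv_cancel₀ hcard.ne', one_mul]

theorem ensembleNorm_le_add_add {u v w : ι → Ω → ℝ} {a b c : ℝ} (ha : 0 ≤ a) (hb : 0 ≤ b)
    (hc : 0 ≤ c) (hu0 : ∀ i, 0 ≤ u i) (hv0 : ∀ i, 0 ≤ v i) (hw0 : ∀ i, 0 ≤ w i)
    (hu : ∀ i ∈ s, MemLp (u i) 2 P) (hv : ∀ i ∈ s, MemLp (v i) 2 P)
    (hw : ∀ i ∈ s, MemLp (w i) 2 P) (hf0 : ∀ i, 0 ≤ f i)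
    (hf : ∀ i ∈ s, ∀ ω, f i ω ≤ a * u i ω + b * v i ω + c * w i ω) :
    ensembleNorm P s f
      ≤ a * ensembleNorm P s u + b * ensembleNorm P s v + c * ensembleNorm P s w := by
  have hauv0 : ∀ i, 0 ≤ fun ω => a * u i ω + b * v i ω := fun i ω =>
    add_nonneg (mul_nonneg ha (hu0 i ω)) (mul_nonneg hb (hv0 i ω))
  have hauv : ∀ i ∈ s, MemLp (fun ω => a * u i ω + b * v i ω) 2 P := fun i hi =>
    ((hu i hi).const_mul a).add ((hv i hi).const_mul b)
  calc ensembleNorm P s f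
      ≤ ensembleNorm P s (fun i ω => (a * u i ω + b * v i ω) + c * w i ω) :=
        ensembleNorm_mono hf0 hf fun i hi => (hauv i hi).add ((hw i hi).const_mul c)
    _ ≤ ensembleNorm P s (fun i ω => a * u i ω + b * v i ω)
        + ensembleNorm P s (fun i ω => c * w i ω) :=
        ensembleNorm_add_le (f := fun i ω => a * u i ω + b * v i ω) hauv0
          (fun i ω => mul_nonneg hc (hw0 i ω)) hauv fun i hi => (hw i hi).const_mul c
    _ ≤ a * ensembleNorm P s u + b * ensembleNorm P s v + c * ensembleNorm P s w := by
        rw [ensembleNorm_const_mul hc, ← ensembleNorm_const_mul ha, ← ensembleNorm_const_mul hb]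
        gcongr
        exact ensembleNorm_add_le (fun i ω => mul_nonneg ha (hu0 i ω))
          (fun i ω => mul_nonneg hb (hv0 i ω)) (fun i hi => (hu i hi).const_mul a)
          fun i hi => (hv i hi).const_mul b

end L2

theorem Finset.sum_sum_le_two_mul_card {ι : Type*} [DecidableEq ι] {s : Finset ι}
    {a : ι → ι → ℝ} {c : ℝ} {i : ι} (hi : i ∈ s) (hc : 0 ≤ c)
    (ha : ∀ j ∈ s, ∀ j' ∈ s, a j j' ≤ c)
    (ha0 : ∀ j ∈ s, ∀ j' ∈ s, j ≠ j' → j ≠ i → a j j' = 0) :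
    ∑ j ∈ s, ∑ j' ∈ s, a j j' ≤ 2 * s.card * c := by
  have hle : ∀ j ∈ s, ∀ j' ∈ s, a j j' ≤ (if j = j' then c else 0) + (if j = i then c else 0) := by
    intro j hj j' hj'
    by_cases h1 : j = j'
    · rw [if_pos h1]; split_ifs <;> linarith [ha j hj j' hj']
    by_cases h2 : j = i
    · rw [if_pos h2, if_neg h1]; linarith [ha j hj j' hj']
    simp [h1, h2, ha0 j hj j' hj' h1 h2]
  refine (Finset.sum_le_sum fun j hj => Finset.sum_le_sum fun j' hj' => hle j hj j' hj').trans ?_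
  simp [Finset.sum_add_distrib, Finset.sum_ite_eq, Finset.sum_ite_eq', hi]
  linarith

theorem le_mul_pow_sub_one_of_le_mul_add {u : ℕ → ℝ} {a c : ℝ} {n : ℕ} (ha : 0 ≤ a)
    (h0 : u 0 ≤ 0) (hu : ∀ m < n, u (m + 1) ≤ a * u m + (a - 1) * c) :
    u n ≤ c * (a ^ n - 1) := by
  induction n with
  | zero => simpa using h0
  | succ n ih =>
    calc u (n + 1) ≤ a * u n + (a - 1) * c := hu n n.lt_succ_self
      _ ≤ a * (c * (a ^ n - 1)) + (a - 1) * c := by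
        gcongr; exact ih fun m hm => hu m (hm.trans n.lt_succ_self)
      _ = c * (a ^ (n + 1) - 1) := by ring

theorem one_add_pow_le_exp_mul {a : ℝ} (ha : 0 ≤ a) (n : ℕ) :
    (1 + a) ^ n ≤ Real.exp (n * a) := by
  rw [Real.exp_nat_mul]
  exact pow_le_pow_left₀ (by linarith) (by linarith [Real.add_one_le_exp a]) n

theorem two_mul_exp_mul_exp_two_mul_sub_one_le {x : ℝ} (hx : 0 ≤ x) :
    2 * Real.exp x * (Real.exp (2 * x) - 1)
      ≤ 1 / 2 * Real.exp (4 * x) * (Real.exp (8 * x) - 1) := by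
  have hexp (n : ℕ) : Real.exp (n * x) = Real.exp x ^ n := Real.exp_nat_mul x n
  have e2 : Real.exp (2 * x) = Real.exp x ^ 2 := by exact_mod_cast hexp 2
  have e4 : Real.exp (4 * x) = Real.exp x ^ 4 := by exact_mod_cast hexp 4
  have e8 : Real.exp (8 * x) = Real.exp x ^ 8 := by exact_mod_cast hexp 8
  have hp : 1 ≤ Real.exp x := Real.one_le_exp hx
  rw [e2, e4, e8]
  set p := Real.exp x
  have hp2 : 0 ≤ p ^ 2 - 1 := by nlinarith
  have hp4 : p ≤ p ^ 4 := le_self_pow₀ hp (by norm_num)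
  have hp8 : 4 * (p ^ 2 - 1) ≤ p ^ 8 - 1 := by
    have : 3 ≤ p ^ 6 + p ^ 4 + p ^ 2 := by
      linarith [one_le_pow₀ (n := 2) hp, one_le_pow₀ (n := 4) hp, one_le_pow₀ (n := 6) hp]
    nlinarith [mul_le_mul_of_nonneg_left this hp2]
  nlinarith [mul_le_mul hp4 hp8 (by positivity) (by positivity)]

section Variance

variable {d : ℕ}

theorem varMeas_nonneg (μ : Measure (Euc d)) : 0 ≤ varMeas μ :=
  integral_nonneg fun _ => sq_nonneg _

theorem integrable_norm_sub_sq (μ : Measure (Euc d)) [IsFiniteMeasure μ] (hμ : MemLp id 2 μ)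
    (c : Euc d) : Integrable (fun x => ‖x - c‖ ^ 2) μ :=
  (hμ.sub (memLp_const c)).norm.integrable_sq

theorem varMeas_le_integral_norm_sub_sq (μ : Measure (Euc d)) [IsProbabilityMeasure μ]
    (hμ : MemLp id 2 μ) (c : Euc d) : varMeas μ ≤ ∫ x, ‖x - c‖ ^ 2 ∂μ := by
  set m := meanMeas μ
  have hid : Integrable (fun x : Euc d => x) μ := hμ.integrable one_le_two
  have hcentered : Integrable (fun x : Euc d => x - m) μ := hid.sub (integrable_const m)
  have hmean : ∫ x, (x - m) ∂μ = 0 := by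
    rw [integral_sub hid (integrable_const m)]
    simp [m, meanMeas]
  have hcross : ∫ x, 2 * ⟪m - c, x - m⟫ ∂μ = 0 := by
    rw [integral_const_mul, integral_inner hcentered, hmean, inner_zero_right, mul_zero]
  calc varMeas μ = ∫ x, (‖x - m‖ ^ 2 + 2 * ⟪m - c, x - m⟫) ∂μ := by
        rw [integral_add (integrable_norm_sub_sq μ hμ m)
          ((hcentered.const_inner (m - c)).const_mul 2), hcross, add_zero]; rfl
    _ ≤ ∫ x, ‖x - c‖ ^ 2 ∂μ := by
        refine integral_mono ((integrable_norm_sub_sq μ hμ m).add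
          ((hcentered.const_inner (m - c)).const_mul 2)) (integrable_norm_sub_sq μ hμ c)
          fun x => ?_
        have hsplit : x - c = (x - m) + (m - c) := by abel
        rw [hsplit, norm_add_sq_real, real_inner_comm]
        nlinarith [sq_nonneg ‖m - c‖]

theorem integral_norm_sub_meanMeas_le (μ : Measure (Euc d)) [IsProbabilityMeasure μ]
    (hμ : MemLp id 2 μ) : ∫ x, ‖x - meanMeas μ‖ ∂μ ≤ √(varMeas μ) := by
  simpa [varMeas] using integral_mul_le_sqrt_mul_sqrt (fun x => norm_nonneg (x - meanMeas μ))
    (fun _ => zero_le_one) (hμ.sub (memLp_const _)).norm (memLp_const (1 : ℝ))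

theorem varMeas_map_le (μ : Measure (Euc d)) [IsProbabilityMeasure μ] (hμ : MemLp id 2 μ)
    {T : Euc d → Euc d} {c : ℝ} (hT : ∀ x y, ‖T x - T y‖ ≤ c * ‖x - y‖) :
    varMeas (μ.map T) ≤ c ^ 2 * varMeas μ := by
  have hTc : Continuous T :=
    (LipschitzWith.of_dist_le' (K := c) (by simpa only [dist_eq_norm] using hT)).continuous
  have : IsProbabilityMeasure (μ.map T) := Measure.isProbabilityMeasure_map hTc.aemeasurable
  have hTμ : MemLp id 2 (μ.map T) := by
    refine (memLp_map_measure_iff aestronglyMeasurable_id hTc.aemeasurable).mpr ?_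
    refine ((hμ.norm.const_mul c).add (memLp_const ‖T 0‖)).of_le hTc.aestronglyMeasurable
      (ae_of_all μ fun x => ?_)
    calc ‖T x‖ ≤ ‖T x - T 0‖ + ‖T 0‖ := norm_le_norm_sub_add _ _
      _ ≤ c * ‖x‖ + ‖T 0‖ := by simpa using hT x 0
      _ ≤ _ := le_abs_self _
  set m := meanMeas μ
  calc varMeas (μ.map T) ≤ ∫ y, ‖y - T m‖ ^ 2 ∂(μ.map T) :=
        varMeas_le_integral_norm_sub_sq _ hTμ (T m)
    _ = ∫ x, ‖T x - T m‖ ^ 2 ∂μ :=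
        integral_map hTc.aemeasurable (by fun_prop)
    _ ≤ ∫ x, c ^ 2 * ‖x - m‖ ^ 2 ∂μ := by
        refine integral_mono_of_nonneg (ae_of_all μ fun x => sq_nonneg _)
          ((integrable_norm_sub_sq μ hμ m).const_mul _) (ae_of_all μ fun x => ?_)
        show ‖T x - T m‖ ^ 2 ≤ c ^ 2 * ‖x - m‖ ^ 2
        rw [← mul_pow]
        exact pow_le_pow_left₀ (norm_nonneg _) (hT x m) 2
    _ = c ^ 2 * varMeas μ := integral_const_mul _ _

end Variance

section Drift

variable {d : ℕ}

structure IsBoundedLipschitz (C L : ℝ) (F : Euc d → Euc d → Euc d) : Prop where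
  norm_le : ∀ x z, ‖F x z‖ ≤ C
  norm_sub_le : ∀ x x' z z', ‖F x z - F x' z'‖ ≤ L * (‖x - x'‖ + ‖z - z'‖)
  nonneg : 0 ≤ L

def driftIntegrand (k : Euc d → Euc d → ℝ) (gk : Euc d → Euc d → Euc d) (h : Euc d → Euc d)
    (x z : Euc d) : Euc d :=
  k x z • h x + gk x z

theorem isBoundedLipschitz_driftIntegrand {B BL CV M : ℝ} (hBL : 0 ≤ BL) (hM : 0 ≤ M)
    {k : Euc d → Euc d → ℝ} {gk : Euc d → Euc d → Euc d} {h : Euc d → Euc d}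
    (hk : KernelAssumptions B BL k gk) (hh : PotGrad CV M h) :
    IsBoundedLipschitz (B * (CV + 1)) (BL * (CV + 1) + B * M) (driftIntegrand k gk h) := by
  obtain ⟨-, hkB, hgkB, hkL, hgkL⟩ := hk
  obtain ⟨hhC, hhM⟩ := hh
  have hB : 0 ≤ B := (abs_nonneg _).trans (hkB 0 0)
  have hCV : 0 ≤ CV := (norm_nonneg _).trans (hhC 0)
  refine ⟨fun x z => ?_, fun x x' z z' => ?_, by positivity⟩
  · calc ‖k x z • h x + gk x z‖ ≤ |k x z| * ‖h x‖ + ‖gk x z‖ := by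
          simpa [norm_smul] using norm_add_le (k x z • h x) (gk x z)
      _ ≤ B * CV + B := by gcongr <;> simp_all
      _ = B * (CV + 1) := by ring
  · set s := ‖x - x'‖ + ‖z - z'‖
    have hsplit : driftIntegrand k gk h x z - driftIntegrand k gk h x' z' =
        (k x z - k x' z') • h x + k x' z' • (h x - h x') + (gk x z - gk x' z') := by
      simp only [driftIntegrand, sub_smul, smul_sub]; abel
    have hxx' : ‖x - x'‖ ≤ s := le_add_of_nonneg_right (norm_nonneg _)
    calc _ ≤ |k x z - k x' z'| * ‖h x‖ + |k x' z'| * ‖h x - h x'‖ + ‖gk x z - gk x' z'‖ := by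
          rw [hsplit]
          refine (norm_add_le _ _).trans (add_le_add ((norm_add_le _ _).trans ?_) le_rfl)
          simp [norm_smul]
      _ ≤ BL * s * CV + B * (M * ‖x - x'‖) + BL * s := by
          gcongr
          · exact hkL x z x' z'
          · exact hhC x
          · exact hkB x' z'
          · exact hhM x x'
          · exact hgkL x z x' z'
      _ ≤ (BL * (CV + 1) + B * M) * s := by
          nlinarith [mul_le_mul_of_nonneg_left hxx' (mul_nonneg hB hM)]

variable {C L : ℝ} {k : Euc d → Euc d → ℝ} {gk : Euc d → Euc d → Euc d} {h : Euc d → Euc d}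

theorem drift_eq_neg_integral (μ : Measure (Euc d)) (z : Euc d) :
    drift k gk h μ z = -∫ x, driftIntegrand k gk h x z ∂μ := rfl

namespace IsBoundedLipschitz

variable {F : Euc d → Euc d → Euc d}

theorem continuous (hF : IsBoundedLipschitz C L F) :
    Continuous fun p : Euc d × Euc d => F p.1 p.2 := by
  refine (LipschitzWith.of_dist_le' (K := 2 * L) fun p q => ?_).continuous
  rw [dist_eq_norm]
  calc ‖F p.1 p.2 - F q.1 q.2‖ ≤ L * (dist p.1 q.1 + dist p.2 q.2) := by
        simpa only [dist_eq_norm] using hF.norm_sub_le p.1 q.1 p.2 q.2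
    _ ≤ L * (dist p q + dist p q) := by
        rw [Prod.dist_eq]
        gcongr; exacts [hF.nonneg, le_max_left _ _, le_max_right _ _]
    _ = 2 * L * dist p q := by ring

theorem integrable (hF : IsBoundedLipschitz C L F) (μ : Measure (Euc d)) [IsFiniteMeasure μ]
    (z : Euc d) : Integrable (fun x => F x z) μ :=
  Integrable.of_bound
    (hF.continuous.comp (continuous_id.prodMk continuous_const)).aestronglyMeasurable C
    (ae_of_all μ fun x => hF.norm_le x z)

theorem norm_inner_le (hF : IsBoundedLipschitz C L F) (x z x' z' : Euc d) :
    ‖⟪F x z, F x' z'⟫‖ ≤ C * C :=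
  (norm_inner_le_norm _ _).trans (mul_le_mul (hF.norm_le x z) (hF.norm_le x' z')
    (norm_nonneg _) ((norm_nonneg _).trans (hF.norm_le x z)))

end IsBoundedLipschitz

theorem norm_drift_le (hF : IsBoundedLipschitz C L (driftIntegrand k gk h))
    (μ : Measure (Euc d)) [IsProbabilityMeasure μ] (z : Euc d) :
    ‖drift k gk h μ z‖ ≤ C := by
  rw [drift_eq_neg_integral, norm_neg]
  simpa using norm_integral_le_of_norm_le_const (μ := μ) (ae_of_all μ fun x => hF.norm_le x z)

theorem norm_drift_sub_le (hF : IsBoundedLipschitz C L (driftIntegrand k gk h))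
    (μ : Measure (Euc d)) [IsProbabilityMeasure μ] (z z' : Euc d) :
    ‖drift k gk h μ z - drift k gk h μ z'‖ ≤ L * ‖z - z'‖ := by
  rw [drift_eq_neg_integral, drift_eq_neg_integral, neg_sub_neg,
    ← integral_sub (hF.integrable μ z') (hF.integrable μ z)]
  calc _ ≤ L * ‖z - z'‖ * μ.real Set.univ :=
        norm_integral_le_of_norm_le_const (ae_of_all μ fun x => by
          simpa [norm_sub_rev z z'] using hF.norm_sub_le x x z' z)
    _ = L * ‖z - z'‖ := by simp

theorem lipschitzWith_drift (hF : IsBoundedLipschitz C L (driftIntegrand k gk h))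
    (μ : Measure (Euc d)) [IsProbabilityMeasure μ] :
    LipschitzWith L.toNNReal (drift k gk h μ) :=
  LipschitzWith.of_dist_le' fun z z' => by
    simpa only [dist_eq_norm] using norm_drift_sub_le hF μ z z'

theorem isProbabilityMeasure_empMeas {N : ℕ} (hN : 0 < N) (pts : ℕ → Euc d) :
    IsProbabilityMeasure (empMeas N pts) := by
  constructor
  simp [empMeas, ENNReal.inv_mul_cancel (Nat.cast_ne_zero.mpr hN.ne') (ENNReal.natCast_ne_top N)]

theorem drift_empMeas (hF : IsBoundedLipschitz C L (driftIntegrand k gk h)) (N : ℕ)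
    (pts : ℕ → Euc d) (z : Euc d) :
    drift k gk h (empMeas N pts) z
      = -((N : ℝ)⁻¹ • ∑ j ∈ Finset.range N, driftIntegrand k gk h (pts j) z) := by
  rw [drift_eq_neg_integral, empMeas, integral_smul_measure,
    integral_finsetSum_measure fun j _ => hF.integrable _ z]
  simp [integral_dirac]

/-- `F(x, z) - ∫ F(·, z) dρ`, recall that `drift` is `-∫ F`. -/
def centeredIntegrand (k : Euc d → Euc d → ℝ) (gk : Euc d → Euc d → Euc d) (h : Euc d → Euc d)
    (ρ : Measure (Euc d)) (x z : Euc d) : Euc d :=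
  driftIntegrand k gk h x z + drift k gk h ρ z

theorem integral_centeredIntegrand (hF : IsBoundedLipschitz C L (driftIntegrand k gk h))
    (ρ : Measure (Euc d)) [IsProbabilityMeasure ρ] (z : Euc d) :
    ∫ x, centeredIntegrand k gk h ρ x z ∂ρ = 0 := by
  simp only [centeredIntegrand]
  rw [integral_add (hF.integrable ρ z) (integrable_const _), drift_eq_neg_integral]
  simp

theorem isBoundedLipschitz_centeredIntegrand
    (hF : IsBoundedLipschitz C L (driftIntegrand k gk h))
    (ρ : Measure (Euc d)) [IsProbabilityMeasure ρ] :
    IsBoundedLipschitz (2 * C) (2 * L) (centeredIntegrand k gk h ρ) := by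
  refine ⟨fun x z => ?_, fun x x' z z' => ?_, by linarith [hF.nonneg]⟩
  · calc _ ≤ ‖driftIntegrand k gk h x z‖ + ‖drift k gk h ρ z‖ := norm_add_le _ _
      _ ≤ C + C := add_le_add (hF.norm_le x z) (norm_drift_le hF ρ z)
      _ = 2 * C := by ring
  · have hsplit : centeredIntegrand k gk h ρ x z - centeredIntegrand k gk h ρ x' z' =
        (driftIntegrand k gk h x z - driftIntegrand k gk h x' z') +
          (drift k gk h ρ z - drift k gk h ρ z') := by
      simp only [centeredIntegrand]; abel
    rw [hsplit]
    calc _ ≤ L * (‖x - x'‖ + ‖z - z'‖) + L * ‖z - z'‖ :=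
          (norm_add_le _ _).trans
            (add_le_add (hF.norm_sub_le x x' z z') (norm_drift_sub_le hF ρ z z'))
      _ ≤ 2 * L * (‖x - x'‖ + ‖z - z'‖) := by
          nlinarith [hF.nonneg, norm_nonneg (x - x'), norm_nonneg (z - z')]

theorem norm_centeredIntegrand_le (hF : IsBoundedLipschitz C L (driftIntegrand k gk h))
    (ρ : Measure (Euc d)) [IsProbabilityMeasure ρ] (hρ : MemLp id 2 ρ) (x z : Euc d) :
    ‖centeredIntegrand k gk h ρ x z‖ ≤ L * (‖x - meanMeas ρ‖ + √(varMeas ρ)) := by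
  set m := meanMeas ρ
  have hdist : Integrable (fun x' : Euc d => ‖x' - m‖) ρ :=
    (hρ.sub (memLp_const m)).norm.integrable one_le_two
  have hG : centeredIntegrand k gk h ρ x z
      = ∫ x', (driftIntegrand k gk h x z - driftIntegrand k gk h x' z) ∂ρ := by
    rw [integral_sub (integrable_const _) (hF.integrable ρ z), integral_const]
    simp [centeredIntegrand, drift_eq_neg_integral, sub_eq_add_neg]
  rw [hG]
  calc _ ≤ ∫ x', L * (‖x - m‖ + ‖x' - m‖) ∂ρ := by
        refine norm_integral_le_of_norm_le (((integrable_const _).add hdist).const_mul L)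
          (ae_of_all ρ fun x' => ?_)
        calc _ ≤ L * (‖x - x'‖ + ‖z - z‖) := hF.norm_sub_le x x' z z
          _ ≤ L * (‖x - m‖ + ‖x' - m‖) := by
              rw [sub_self, norm_zero, add_zero]
              refine mul_le_mul_of_nonneg_left ?_ hF.nonneg
              simpa only [norm_sub_rev m x'] using norm_sub_le_norm_sub_add_norm_sub x m x'
    _ = L * (‖x - m‖ + ∫ x', ‖x' - m‖ ∂ρ) := by
        rw [integral_const_mul, integral_add (integrable_const _) hdist]
        simp
    _ ≤ L * (‖x - m‖ + √(varMeas ρ)) := by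
        gcongr
        · exact hF.nonneg
        · exact integral_norm_sub_meanMeas_le ρ hρ

theorem integral_norm_centeredIntegrand_sq_le
    (hF : IsBoundedLipschitz C L (driftIntegrand k gk h))
    (ρ : Measure (Euc d)) [IsProbabilityMeasure ρ] (hρ : MemLp id 2 ρ) (w : Euc d → Euc d) :
    ∫ x, ‖centeredIntegrand k gk h ρ x (w x)‖ ^ 2 ∂ρ ≤ 4 * L ^ 2 * varMeas ρ := by
  set m := meanMeas ρ
  have hvar := varMeas_nonneg ρ
  calc _ ≤ ∫ x, 2 * L ^ 2 * (‖x - m‖ ^ 2 + varMeas ρ) ∂ρ := by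
        refine integral_mono_of_nonneg (ae_of_all ρ fun x => sq_nonneg _)
          (((integrable_norm_sub_sq ρ hρ m).add (integrable_const _)).const_mul _)
          (ae_of_all ρ fun x => ?_)
        have hle : ‖centeredIntegrand k gk h ρ x (w x)‖ ^ 2 ≤ (L * (‖x - m‖ + √(varMeas ρ))) ^ 2 :=
          pow_le_pow_left₀ (norm_nonneg _) (norm_centeredIntegrand_le hF ρ hρ x (w x)) 2
        show ‖centeredIntegrand k gk h ρ x (w x)‖ ^ 2 ≤ 2 * L ^ 2 * (‖x - m‖ ^ 2 + varMeas ρ)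
        nlinarith [Real.sq_sqrt hvar, sq_nonneg (L * (‖x - m‖ - √(varMeas ρ)))]
    _ = 4 * L ^ 2 * varMeas ρ := by
        rw [integral_const_mul, integral_add (integrable_norm_sub_sq ρ hρ m) (integrable_const _)]
        simp only [integral_const, probReal_univ, one_smul]
        rw [← varMeas]; ring

end Drift

section MeanField

variable {d : ℕ} {C L γ : ℝ} {k : Euc d → Euc d → ℝ} {gk : Euc d → Euc d → Euc d}
  {h : Euc d → Euc d} {ρ₀ : Measure (Euc d)}

theorem continuous_sub_smul_drift (hF : IsBoundedLipschitz C L (driftIntegrand k gk h))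
    (μ : Measure (Euc d)) [IsProbabilityMeasure μ] (γ : ℝ) :
    Continuous fun z => z - γ • drift k gk h μ z :=
  continuous_id.sub ((lipschitzWith_drift hF μ).continuous.const_smul γ)

theorem norm_sub_smul_drift_sub_le (hF : IsBoundedLipschitz C L (driftIntegrand k gk h))
    (μ : Measure (Euc d)) [IsProbabilityMeasure μ] (hγ : 0 ≤ γ) (z z' : Euc d) :
    ‖(z - γ • drift k gk h μ z) - (z' - γ • drift k gk h μ z')‖ ≤ (1 + γ * L) * ‖z - z'‖ := by
  have hsplit : (z - γ • drift k gk h μ z) - (z' - γ • drift k gk h μ z')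
      = (z - z') - γ • (drift k gk h μ z - drift k gk h μ z') := by
    rw [smul_sub]; abel
  rw [hsplit]
  calc _ ≤ ‖z - z'‖ + γ * (L * ‖z - z'‖) := by
        refine (norm_sub_le _ _).trans (add_le_add le_rfl ?_)
        rw [norm_smul, Real.norm_of_nonneg hγ]
        exact mul_le_mul_of_nonneg_left (norm_drift_sub_le hF μ z z') hγ
    _ = (1 + γ * L) * ‖z - z'‖ := by ring

variable (γ ρ₀) in
theorem isProbabilityMeasure_mfSeq (hF : IsBoundedLipschitz C L (driftIntegrand k gk h))
    [IsProbabilityMeasure ρ₀] (n : ℕ) : IsProbabilityMeasure (mfSeq γ k gk h ρ₀ n) := by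
  induction n with
  | zero => assumption
  | succ n ih =>
    exact Measure.isProbabilityMeasure_map
      (continuous_sub_smul_drift hF _ γ).aemeasurable

theorem memLp_mfSeq (hF : IsBoundedLipschitz C L (driftIntegrand k gk h))
    [IsProbabilityMeasure ρ₀] (hρ₀ : MemLp id 2 ρ₀) (n : ℕ) :
    MemLp id 2 (mfSeq γ k gk h ρ₀ n) := by
  induction n with
  | zero => exact hρ₀
  | succ n ih =>
    have := isProbabilityMeasure_mfSeq γ ρ₀ hF n
    have hcont := continuous_sub_smul_drift hF (mfSeq γ k gk h ρ₀ n) γ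
    refine (memLp_map_measure_iff aestronglyMeasurable_id hcont.aemeasurable).mpr ?_
    refine (ih.norm.add (memLp_const (|γ| * C))).of_le hcont.aestronglyMeasurable
      (ae_of_all _ fun z => ?_)
    calc _ ≤ ‖z‖ + ‖γ • drift k gk h (mfSeq γ k gk h ρ₀ n) z‖ := norm_sub_le _ _
      _ ≤ ‖z‖ + |γ| * C := by
          rw [norm_smul, Real.norm_eq_abs]
          gcongr
          exact norm_drift_le hF _ z
      _ ≤ _ := le_abs_self _

theorem varMeas_mfSeq_le (hF : IsBoundedLipschitz C L (driftIntegrand k gk h))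
    [IsProbabilityMeasure ρ₀] (hρ₀ : MemLp id 2 ρ₀) (hγ : 0 ≤ γ) (n : ℕ) :
    varMeas (mfSeq γ k gk h ρ₀ n) ≤ ((1 + γ * L) ^ n) ^ 2 * varMeas ρ₀ := by
  induction n with
  | zero => simp [mfSeq]
  | succ n ih =>
    have := isProbabilityMeasure_mfSeq γ ρ₀ hF n
    calc varMeas (mfSeq γ k gk h ρ₀ (n + 1))
        ≤ (1 + γ * L) ^ 2 * varMeas (mfSeq γ k gk h ρ₀ n) :=
          varMeas_map_le _ (memLp_mfSeq hF hρ₀ n) (norm_sub_smul_drift_sub_le hF _ hγ)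
      _ ≤ (1 + γ * L) ^ 2 * (((1 + γ * L) ^ n) ^ 2 * varMeas ρ₀) := by gcongr
      _ = ((1 + γ * L) ^ (n + 1)) ^ 2 * varMeas ρ₀ := by ring

theorem varMeas_mfSeq_le_exp (hF : IsBoundedLipschitz C L (driftIntegrand k gk h))
    [IsProbabilityMeasure ρ₀] (hρ₀ : MemLp id 2 ρ₀) (hγ : 0 ≤ γ) {n : ℕ} {T : ℝ}
    (hn : n * γ ≤ T) :
    varMeas (mfSeq γ k gk h ρ₀ n) ≤ Real.exp (L * T) ^ 2 * varMeas ρ₀ := by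
  have hpow : (1 + γ * L) ^ n ≤ Real.exp (L * T) :=
    (one_add_pow_le_exp_mul (mul_nonneg hγ hF.nonneg) n).trans
      (Real.exp_le_exp.mpr (by nlinarith [hF.nonneg]))
  have := varMeas_nonneg ρ₀
  have := hF.nonneg
  exact (varMeas_mfSeq_le hF hρ₀ hγ n).trans (by gcongr)

def mfFlow (γ : ℝ) (k : Euc d → Euc d → ℝ) (gk : Euc d → Euc d → Euc d) (h : Euc d → Euc d)
    (ρ₀ : Measure (Euc d)) : ℕ → Euc d → Euc d
  | 0 => id
  | n + 1 => fun z => mfFlow γ k gk h ρ₀ n z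
      - γ • drift k gk h (mfSeq γ k gk h ρ₀ n) (mfFlow γ k gk h ρ₀ n z)

theorem continuous_mfFlow (hF : IsBoundedLipschitz C L (driftIntegrand k gk h))
    [IsProbabilityMeasure ρ₀] (n : ℕ) : Continuous (mfFlow γ k gk h ρ₀ n) := by
  induction n with
  | zero => exact continuous_id
  | succ n ih =>
    have := isProbabilityMeasure_mfSeq γ ρ₀ hF n
    exact (continuous_sub_smul_drift hF _ γ).comp ih

theorem map_mfFlow (hF : IsBoundedLipschitz C L (driftIntegrand k gk h))
    [IsProbabilityMeasure ρ₀] (n : ℕ) :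
    ρ₀.map (mfFlow γ k gk h ρ₀ n) = mfSeq γ k gk h ρ₀ n := by
  induction n with
  | zero => exact Measure.map_id
  | succ n ih =>
    have := isProbabilityMeasure_mfSeq γ ρ₀ hF n
    set T := fun z => z - γ • drift k gk h (mfSeq γ k gk h ρ₀ n) z
    calc ρ₀.map (mfFlow γ k gk h ρ₀ (n + 1)) = ρ₀.map (T ∘ mfFlow γ k gk h ρ₀ n) := rfl
      _ = mfSeq γ k gk h ρ₀ (n + 1) := by
        rw [← Measure.map_map (continuous_sub_smul_drift hF _ γ).measurable
          (continuous_mfFlow hF n).measurable, ih]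
        rfl

end MeanField

section Sample

variable {d : ℕ} {Ω : Type*} [MeasurableSpace Ω] {P : Measure Ω} {N : ℕ}

structure IsIIDSample (P : Measure Ω) (N : ℕ) (W : ℕ → Ω → Euc d) (ρ : Measure (Euc d)) :
    Prop where
  measurable : ∀ j < N, Measurable (W j)
  iIndepFun : iIndepFun (fun j : Fin N => W j) P
  map_eq : ∀ j < N, P.map (W j) = ρ

theorem IsIIDSample.comp {W W' : ℕ → Ω → Euc d} {ρ : Measure (Euc d)} (hW : IsIIDSample P N W ρ)
    {f : Euc d → Euc d} (hf : Measurable f) (hW' : ∀ j < N, W' j = f ∘ W j) :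
    IsIIDSample P N W' (ρ.map f) where
  measurable j hj := hW' j hj ▸ hf.comp (hW.measurable j hj)
  iIndepFun := by
    have heq : (fun j : Fin N => W' j) = fun j : Fin N => f ∘ W j :=
      funext fun j => hW' j j.isLt
    rw [heq]
    exact hW.iIndepFun.comp (fun _ => f) fun _ => hf
  map_eq j hj := by
    rw [hW' j hj, ← Measure.map_map hf (hW.measurable j hj), hW.map_eq j hj]

theorem isIIDSample_mirrored {C L γ : ℝ} {k : Euc d → Euc d → ℝ} {gk : Euc d → Euc d → Euc d}
    {h : Euc d → Euc d} {ρ₀ : Measure (Euc d)} [IsProbabilityMeasure ρ₀]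
    (hF : IsBoundedLipschitz C L (driftIntegrand k gk h))
    {X₀ : ℕ → Ω → Euc d} (hX₀ : IsIIDSample P N X₀ ρ₀) {Z : ℕ → ℕ → Ω → Euc d}
    (hZ0 : ∀ j < N, ∀ ω, Z 0 j ω = X₀ j ω)
    (hZ : ∀ n, ∀ j < N, ∀ ω, Z (n + 1) j ω =
      Z n j ω - γ • drift k gk h (mfSeq γ k gk h ρ₀ n) (Z n j ω)) (n : ℕ) :
    IsIIDSample P N (Z n) (mfSeq γ k gk h ρ₀ n) := by
  have hZflow : ∀ j < N, Z n j = mfFlow γ k gk h ρ₀ n ∘ X₀ j := by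
    intro j hj
    induction n with
    | zero => exact funext (hZ0 j hj)
    | succ n ih => funext ω; rw [hZ n j hj ω, ih]; rfl
  rw [← map_mfFlow hF]
  exact hX₀.comp (continuous_mfFlow hF n).measurable hZflow

end Sample

theorem integral_inner_eq_zero_of_indepFun {Ω α β E : Type*} [MeasurableSpace Ω]
    [MeasurableSpace α] [MeasurableSpace β] [NormedAddCommGroup E] [InnerProductSpace ℝ E]
    [CompleteSpace E] {P : Measure Ω} [IsProbabilityMeasure P] {U : Ω → α} {V : Ω → β}
    (hU : Measurable U) (hV : Measurable V) (hUV : IndepFun U V P) {f : α → β → E} {g : β → E}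
    (hfg : Integrable (fun p : α × β => ⟪f p.1 p.2, g p.2⟫) ((P.map U).prod (P.map V)))
    (hf : ∀ y, Integrable (fun x => f x y) (P.map U)) (hmean : ∀ y, ∫ x, f x y ∂(P.map U) = 0) :
    ∫ ω, ⟪f (U ω) (V ω), g (V ω)⟫ ∂P = 0 := by
  have hlaw : P.map (fun ω => (U ω, V ω)) = (P.map U).prod (P.map V) :=
    (indepFun_iff_map_prod_eq_prod_map_map hU.aemeasurable hV.aemeasurable).mp hUV
  rw [← integral_map (f := fun p : α × β => ⟪f p.1 p.2, g p.2⟫) (hU.prodMk hV).aemeasurable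
    (hlaw ▸ hfg.aestronglyMeasurable), hlaw, integral_prod_symm _ hfg]
  simp_rw [real_inner_comm (g _)]
  simp [integral_inner (hf _), hmean]

section KeyVariance

variable {d : ℕ} {C L : ℝ} {k : Euc d → Euc d → ℝ} {gk : Euc d → Euc d → Euc d}
  {h : Euc d → Euc d} {ρ : Measure (Euc d)} [IsProbabilityMeasure ρ]
  {Ω : Type*} [MeasurableSpace Ω] {P : Measure Ω} {N : ℕ}
  {W : ℕ → Ω → Euc d}

theorem integral_norm_centeredIntegrand_sample_sq_le [IsProbabilityMeasure P]
    (hF : IsBoundedLipschitz C L (driftIntegrand k gk h)) (hρ : MemLp id 2 ρ)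
    (hW : IsIIDSample P N W ρ) {i j : ℕ} (hi : i < N) (hj : j < N) :
    ∫ ω, ‖centeredIntegrand k gk h ρ (W j ω) (W i ω)‖ ^ 2 ∂P ≤ 4 * L ^ 2 * varMeas ρ := by
  have hG := (isBoundedLipschitz_centeredIntegrand hF ρ).continuous
  by_cases hji : j = i
  · subst hji
    rw [← integral_map (hW.measurable j hj).aemeasurable
      (f := fun z => ‖centeredIntegrand k gk h ρ z z‖ ^ 2)
      ((hG.comp (continuous_id.prodMk continuous_id)).norm.pow 2).aestronglyMeasurable,
      hW.map_eq j hj]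
    exact integral_norm_centeredIntegrand_sq_le hF ρ hρ id
  · have hindep : IndepFun (W j) (W i) P :=
      hW.iIndepFun.indepFun (i := ⟨j, hj⟩) (j := ⟨i, hi⟩) (by simpa [Fin.ext_iff] using hji)
    have hlaw : P.map (fun ω => (W j ω, W i ω)) = ρ.prod ρ := by
      rw [(indepFun_iff_map_prod_eq_prod_map_map (hW.measurable j hj).aemeasurable
        (hW.measurable i hi).aemeasurable).mp hindep, hW.map_eq j hj, hW.map_eq i hi]
    have hint : Integrable (fun p : Euc d × Euc d =>
        ‖centeredIntegrand k gk h ρ p.1 p.2‖ ^ 2) (ρ.prod ρ) :=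
      Integrable.of_bound (hG.norm.pow 2).aestronglyMeasurable ((2 * C) ^ 2)
        (ae_of_all _ fun p => by
          simpa using pow_le_pow_left₀ (norm_nonneg _)
            ((isBoundedLipschitz_centeredIntegrand hF ρ).norm_le p.1 p.2) 2)
    rw [← integral_map ((hW.measurable j hj).prodMk (hW.measurable i hi)).aemeasurable
      (f := fun p => ‖centeredIntegrand k gk h ρ p.1 p.2‖ ^ 2)
      (hG.norm.pow 2).aestronglyMeasurable, hlaw, integral_prod_symm _ hint]
    calc _ ≤ ∫ _z, 4 * L ^ 2 * varMeas ρ ∂ρ :=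
          integral_mono_of_nonneg (ae_of_all _ fun z => integral_nonneg fun x => sq_nonneg _)
            (integrable_const _)
            (ae_of_all _ fun z => integral_norm_centeredIntegrand_sq_le hF ρ hρ fun _ => z)
      _ = 4 * L ^ 2 * varMeas ρ := by simp

theorem measurable_centeredIntegrand_sample
    (hF : IsBoundedLipschitz C L (driftIntegrand k gk h)) (hW : IsIIDSample P N W ρ)
    {i j : ℕ} (hi : i < N) (hj : j < N) :
    Measurable fun ω => centeredIntegrand k gk h ρ (W j ω) (W i ω) :=
  (isBoundedLipschitz_centeredIntegrand hF ρ).continuous.measurable2 (hW.measurable j hj)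
    (hW.measurable i hi)

theorem memLp_centeredIntegrand_sample [IsProbabilityMeasure P]
    (hF : IsBoundedLipschitz C L (driftIntegrand k gk h)) (hW : IsIIDSample P N W ρ)
    {i j : ℕ} (hi : i < N) (hj : j < N) :
    MemLp (fun ω => centeredIntegrand k gk h ρ (W j ω) (W i ω)) 2 P :=
  MemLp.of_bound (measurable_centeredIntegrand_sample hF hW hi hj).aestronglyMeasurable (2 * C)
    (ae_of_all P fun _ => (isBoundedLipschitz_centeredIntegrand hF ρ).norm_le _ _)

theorem integrable_inner_centeredIntegrand_sample [IsProbabilityMeasure P]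
    (hF : IsBoundedLipschitz C L (driftIntegrand k gk h)) (hW : IsIIDSample P N W ρ)
    {i j j' : ℕ} (hi : i < N) (hj : j < N) (hj' : j' < N) :
    Integrable (fun ω => ⟪centeredIntegrand k gk h ρ (W j ω) (W i ω),
      centeredIntegrand k gk h ρ (W j' ω) (W i ω)⟫) P :=
  Integrable.of_bound ((measurable_centeredIntegrand_sample hF hW hi hj).inner
    (measurable_centeredIntegrand_sample hF hW hi hj')).aestronglyMeasurable (2 * C * (2 * C))
    (ae_of_all P fun _ => (isBoundedLipschitz_centeredIntegrand hF ρ).norm_inner_le _ _ _ _)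

theorem integral_inner_centeredIntegrand_sample_le [IsProbabilityMeasure P]
    (hF : IsBoundedLipschitz C L (driftIntegrand k gk h)) (hρ : MemLp id 2 ρ)
    (hW : IsIIDSample P N W ρ) {i j j' : ℕ} (hi : i < N) (hj : j < N) (hj' : j' < N) :
    ∫ ω, ⟪centeredIntegrand k gk h ρ (W j ω) (W i ω),
      centeredIntegrand k gk h ρ (W j' ω) (W i ω)⟫ ∂P ≤ 4 * L ^ 2 * varMeas ρ := by
  have hmemLp : ∀ l < N, MemLp (fun ω => ‖centeredIntegrand k gk h ρ (W l ω) (W i ω)‖) 2 P :=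
    fun l hl => (memLp_centeredIntegrand_sample hF hW hi hl).norm
  have hc : 0 ≤ 4 * L ^ 2 * varMeas ρ := by have := varMeas_nonneg ρ; positivity
  calc _ ≤ ∫ ω, ‖centeredIntegrand k gk h ρ (W j ω) (W i ω)‖ *
        ‖centeredIntegrand k gk h ρ (W j' ω) (W i ω)‖ ∂P :=
        integral_mono (integrable_inner_centeredIntegrand_sample hF hW hi hj hj')
          ((hmemLp j hj).integrable_mul (hmemLp j' hj')) fun ω => real_inner_le_norm _ _
    _ ≤ √(4 * L ^ 2 * varMeas ρ) * √(4 * L ^ 2 * varMeas ρ) :=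
        (integral_mul_le_sqrt_mul_sqrt (fun _ => norm_nonneg _) (fun _ => norm_nonneg _)
          (hmemLp j hj) (hmemLp j' hj')).trans (by
            gcongr <;> exact integral_norm_centeredIntegrand_sample_sq_le hF hρ hW hi ‹_›)
    _ = 4 * L ^ 2 * varMeas ρ := Real.mul_self_sqrt hc

theorem integral_inner_centeredIntegrand_sample_eq_zero [IsProbabilityMeasure P]
    (hF : IsBoundedLipschitz C L (driftIntegrand k gk h)) (hW : IsIIDSample P N W ρ)
    {i j j' : ℕ} (hi : i < N) (hj : j < N) (hj' : j' < N) (hjj' : j ≠ j') (hji : j ≠ i) :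
    ∫ ω, ⟪centeredIntegrand k gk h ρ (W j ω) (W i ω),
      centeredIntegrand k gk h ρ (W j' ω) (W i ω)⟫ ∂P = 0 := by
  have hG := isBoundedLipschitz_centeredIntegrand hF ρ
  have hmeas : ∀ l : Fin N, Measurable (W l) := fun l => hW.measurable l l.isLt
  have hindep : IndepFun (W j) (fun ω => (W j' ω, W i ω)) P :=
    (hW.iIndepFun.indepFun_prodMk hmeas ⟨j', hj'⟩ ⟨i, hi⟩ ⟨j, hj⟩
      (by simpa [Fin.ext_iff] using hjj'.symm) (by simpa [Fin.ext_iff] using hji.symm)).symm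
  refine integral_inner_eq_zero_of_indepFun (hW.measurable j hj)
    ((hW.measurable j' hj').prodMk (hW.measurable i hi)) hindep
    (f := fun x w => centeredIntegrand k gk h ρ x w.2)
    (g := fun w => centeredIntegrand k gk h ρ w.1 w.2) ?_
    (fun w => (hG.integrable _ w.2)) fun w => ?_
  · exact Integrable.of_bound
      ((hG.continuous.comp (continuous_fst.prodMk (continuous_snd.comp continuous_snd))).inner
        (hG.continuous.comp continuous_snd)).aestronglyMeasurable (2 * C * (2 * C))
      (ae_of_all _ fun _ => hG.norm_inner_le _ _ _ _)
  · rw [hW.map_eq j hj]; exact integral_centeredIntegrand hF ρ w.2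

theorem integral_norm_smul_sum_centeredIntegrand_sq_le [IsProbabilityMeasure P]
    (hF : IsBoundedLipschitz C L (driftIntegrand k gk h)) (hρ : MemLp id 2 ρ)
    (hW : IsIIDSample P N W ρ) {i : ℕ} (hi : i < N) :
    ∫ ω, ‖(N : ℝ)⁻¹ • ∑ j ∈ Finset.range N, centeredIntegrand k gk h ρ (W j ω) (W i ω)‖ ^ 2 ∂P
      ≤ 8 * L ^ 2 * varMeas ρ / N := by
  have hN : (0 : ℝ) < N := by exact_mod_cast Nat.zero_lt_of_lt hi
  have hc : 0 ≤ 4 * L ^ 2 * varMeas ρ := by have := varMeas_nonneg ρ; positivity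
  have hint : ∀ j ∈ Finset.range N, ∀ j' ∈ Finset.range N, Integrable (fun ω =>
      ⟪centeredIntegrand k gk h ρ (W j ω) (W i ω),
        centeredIntegrand k gk h ρ (W j' ω) (W i ω)⟫) P := fun j hj j' hj' =>
    integrable_inner_centeredIntegrand_sample hF hW hi (Finset.mem_range.mp hj)
      (Finset.mem_range.mp hj')
  calc _ = (N : ℝ)⁻¹ ^ 2 * ∑ j ∈ Finset.range N, ∑ j' ∈ Finset.range N,
        ∫ ω, ⟪centeredIntegrand k gk h ρ (W j ω) (W i ω),
          centeredIntegrand k gk h ρ (W j' ω) (W i ω)⟫ ∂P := by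
        simp_rw [norm_smul, mul_pow, Real.norm_of_nonneg (inv_nonneg.mpr hN.le),
          ← real_inner_self_eq_norm_sq, sum_inner, inner_sum]
        rw [integral_const_mul, integral_finsetSum _ fun j hj =>
          integrable_finsetSum _ (hint j hj)]
        exact congrArg _ (Finset.sum_congr rfl fun j hj => integral_finsetSum _ (hint j hj))
    _ ≤ (N : ℝ)⁻¹ ^ 2 * (2 * N * (4 * L ^ 2 * varMeas ρ)) := by
        gcongr
        simpa using Finset.sum_sum_le_two_mul_card (Finset.mem_range.mpr hi) hc
          (fun j hj j' hj' => integral_inner_centeredIntegrand_sample_le hF hρ hW hi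
            (Finset.mem_range.mp hj) (Finset.mem_range.mp hj'))
          fun j hj j' hj' hjj' hji => integral_inner_centeredIntegrand_sample_eq_zero hF hW hi
            (Finset.mem_range.mp hj) (Finset.mem_range.mp hj') hjj' hji
    _ = 8 * L ^ 2 * varMeas ρ / N := by field_simp; ring

theorem ensembleNorm_norm_smul_sum_centeredIntegrand_le [IsProbabilityMeasure P]
    (hF : IsBoundedLipschitz C L (driftIntegrand k gk h)) (hρ : MemLp id 2 ρ)
    (hW : IsIIDSample P N W ρ) :
    ensembleNorm P (Finset.range N) (fun i ω =>
      ‖(N : ℝ)⁻¹ • ∑ j ∈ Finset.range N, centeredIntegrand k gk h ρ (W j ω) (W i ω)‖)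
      ≤ √(8 * L ^ 2 * varMeas ρ) := by
  rcases Nat.eq_zero_or_pos N with hN | hN
  · simp [ensembleNorm, hN]
  refine Real.sqrt_le_sqrt ((Finset.sum_le_sum fun i hi =>
    integral_norm_smul_sum_centeredIntegrand_sq_le hF hρ hW (Finset.mem_range.mp hi)).trans ?_)
  rw [Finset.sum_const, Finset.card_range, nsmul_eq_mul, mul_div_cancel₀ _ (by positivity)]

end KeyVariance

section Step

variable {d : ℕ} {C L γ : ℝ} {k : Euc d → Euc d → ℝ} {gk : Euc d → Euc d → Euc d}
  {h : Euc d → Euc d}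

theorem norm_step_sub_step_le (hF : IsBoundedLipschitz C L (driftIntegrand k gk h))
    (ρ : Measure (Euc d)) [IsProbabilityMeasure ρ] (hγ : 0 ≤ γ) {N : ℕ} (x z : ℕ → Euc d)
    {i : ℕ} (hi : i < N) :
    ‖(x i - γ • drift k gk h (empMeas N x) (x i)) - (z i - γ • drift k gk h ρ (z i))‖
      ≤ (1 + γ * L) * ‖x i - z i‖ + γ * L * ((N : ℝ)⁻¹ * ∑ j ∈ Finset.range N, ‖x j - z j‖)
        + γ * ‖(N : ℝ)⁻¹ • ∑ j ∈ Finset.range N, centeredIntegrand k gk h ρ (z j) (z i)‖ := by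
  have hN : (N : ℝ) ≠ 0 := Nat.cast_ne_zero.mpr (Nat.ne_zero_of_lt hi)
  set F := driftIntegrand k gk h
  set D := (N : ℝ)⁻¹ • ∑ j ∈ Finset.range N, (F (x j) (x i) - F (z j) (z i))
  set S := (N : ℝ)⁻¹ • ∑ j ∈ Finset.range N, centeredIntegrand k gk h ρ (z j) (z i)
  have hdecomp : (x i - γ • drift k gk h (empMeas N x) (x i)) - (z i - γ • drift k gk h ρ (z i))
      = (x i - z i) + γ • D + γ • S := by
    simp only [D, S, centeredIntegrand, drift_empMeas hF, Finset.sum_add_distrib,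
      Finset.sum_sub_distrib, Finset.sum_const, Finset.card_range, ← Nat.cast_smul_eq_nsmul ℝ,
      smul_add, smul_sub, smul_neg, smul_smul, inv_mul_cancel₀ hN, one_smul]
    abel
  have hD : ‖D‖ ≤ L * ‖x i - z i‖ + L * ((N : ℝ)⁻¹ * ∑ j ∈ Finset.range N, ‖x j - z j‖) := by
    calc ‖D‖ ≤ (N : ℝ)⁻¹ * ∑ j ∈ Finset.range N, L * (‖x j - z j‖ + ‖x i - z i‖) := by
          rw [norm_smul, Real.norm_of_nonneg (by positivity)]
          gcongr
          exact (norm_sum_le _ _).trans (Finset.sum_le_sum fun j _ => hF.norm_sub_le _ _ _ _)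
      _ = _ := by
          rw [← Finset.mul_sum, Finset.sum_add_distrib, Finset.sum_const, Finset.card_range,
            nsmul_eq_mul]
          field_simp
          ring
  rw [hdecomp]
  calc _ ≤ ‖x i - z i‖ + γ * ‖D‖ + γ * ‖S‖ := by
        refine (norm_add_le _ _).trans (add_le_add ((norm_add_le _ _).trans ?_) ?_) <;>
          simp [norm_smul, Real.norm_of_nonneg hγ]
    _ ≤ _ := by nlinarith [mul_le_mul_of_nonneg_left hD hγ]

theorem ensembleNorm_step_le {Ω : Type*} [MeasurableSpace Ω] {P : Measure Ω}
    [IsProbabilityMeasure P] (hF : IsBoundedLipschitz C L (driftIntegrand k gk h))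
    {ρ : Measure (Euc d)} [IsProbabilityMeasure ρ] (hρ : MemLp id 2 ρ) (hγ : 0 ≤ γ) {N : ℕ}
    {X Z X' Z' : ℕ → Ω → Euc d} (hZ : IsIIDSample P N Z ρ)
    (hΔ : ∀ i < N, MemLp (fun ω => ‖X i ω - Z i ω‖) 2 P)
    (hX' : ∀ i < N, ∀ ω, X' i ω = X i ω - γ • drift k gk h (empMeas N fun j => X j ω) (X i ω))
    (hZ' : ∀ i < N, ∀ ω, Z' i ω = Z i ω - γ • drift k gk h ρ (Z i ω)) :
    ensembleNorm P (Finset.range N) (fun i ω => ‖X' i ω - Z' i ω‖)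
      ≤ (1 + 2 * γ * L) * ensembleNorm P (Finset.range N) (fun i ω => ‖X i ω - Z i ω‖)
        + γ * √(8 * L ^ 2 * varMeas ρ) := by
  set s := Finset.range N
  set e := ensembleNorm P s (fun i ω => ‖X i ω - Z i ω‖)
  have hL := hF.nonneg
  have hΔ' : ∀ i ∈ s, MemLp (fun ω => ‖X i ω - Z i ω‖) 2 P :=
    fun i hi => hΔ i (Finset.mem_range.mp hi)
  have haverage : ensembleNorm P s
      (fun _ ω => (N : ℝ)⁻¹ * ∑ j ∈ s, ‖X j ω - Z j ω‖) ≤ e := by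
    simpa only [s, Finset.card_range] using ensembleNorm_average_le hΔ'
  have hfluct : ∀ i ∈ s, MemLp (fun ω =>
      ‖(N : ℝ)⁻¹ • ∑ j ∈ s, centeredIntegrand k gk h ρ (Z j ω) (Z i ω)‖) 2 P := fun i hi =>
    ((memLp_finsetSum s fun j hj => memLp_centeredIntegrand_sample hF hZ
      (Finset.mem_range.mp hi) (Finset.mem_range.mp hj)).const_smul ((N : ℝ)⁻¹)).norm
  calc ensembleNorm P s (fun i ω => ‖X' i ω - Z' i ω‖)
      ≤ (1 + γ * L) * e + γ * L * ensembleNorm P s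
          (fun _ ω => (N : ℝ)⁻¹ * ∑ j ∈ s, ‖X j ω - Z j ω‖)
        + γ * ensembleNorm P s (fun i ω =>
          ‖(N : ℝ)⁻¹ • ∑ j ∈ s, centeredIntegrand k gk h ρ (Z j ω) (Z i ω)‖) := by
        refine ensembleNorm_le_add_add (by positivity) (by positivity) hγ
          (fun i ω => norm_nonneg _) (fun i ω => ?_) (fun i ω => norm_nonneg _) hΔ'
          (fun i _ => (memLp_finsetSum s hΔ').const_mul _) hfluct
          (fun i ω => norm_nonneg _) fun i hi ω => ?_
        · exact mul_nonneg (by positivity) (Finset.sum_nonneg fun j _ => norm_nonneg _)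
        · rw [hX' i (Finset.mem_range.mp hi), hZ' i (Finset.mem_range.mp hi)]
          exact norm_step_sub_step_le hF ρ hγ (fun j => X j ω) (fun j => Z j ω)
            (Finset.mem_range.mp hi)
    _ ≤ (1 + γ * L) * e + γ * L * e + γ * √(8 * L ^ 2 * varMeas ρ) := by
        gcongr
        exact ensembleNorm_norm_smul_sum_centeredIntegrand_le hF hρ hZ
    _ = (1 + 2 * γ * L) * e + γ * √(8 * L ^ 2 * varMeas ρ) := by ring

end Step

section MeanFieldLimit

variable {d : ℕ} {C L γ : ℝ} {k : Euc d → Euc d → ℝ} {gk : Euc d → Euc d → Euc d}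
  {h : Euc d → Euc d} {ρ₀ : Measure (Euc d)} {Ω : Type} [MeasurableSpace Ω] {P : Measure Ω}
  {N : ℕ} {X Z : ℕ → ℕ → Ω → Euc d}

theorem IsInteracting.isIIDSample (hX : IsInteracting γ k gk h ρ₀ N P X) :
    IsIIDSample P N (X 0) ρ₀ :=
  ⟨fun j _ => hX.1 0 j, hX.2.1, hX.2.2.1⟩

theorem norm_interacting_sub_mirrored_le (hF : IsBoundedLipschitz C L (driftIntegrand k gk h))
    [IsProbabilityMeasure ρ₀] (hγ : 0 ≤ γ) (hN : 0 < N) (hX : IsInteracting γ k gk h ρ₀ N P X)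
    (hZ0 : ∀ j < N, ∀ ω, Z 0 j ω = X 0 j ω)
    (hZ : ∀ n, ∀ j < N, ∀ ω, Z (n + 1) j ω =
      Z n j ω - γ • drift k gk h (mfSeq γ k gk h ρ₀ n) (Z n j ω)) (m : ℕ) :
    ∀ j < N, ∀ ω, ‖X m j ω - Z m j ω‖ ≤ m * (2 * γ * C) := by
  induction m with
  | zero => intro j hj ω; simp [hZ0 j hj ω]
  | succ m ih =>
    intro j hj ω
    have := isProbabilityMeasure_mfSeq γ ρ₀ hF m
    have := isProbabilityMeasure_empMeas hN fun j => X m j ω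
    have hdrift : ∀ (μ : Measure (Euc d)) [IsProbabilityMeasure μ] (z : Euc d),
        ‖γ • drift k gk h μ z‖ ≤ γ * C := fun μ _ z => by
      rw [norm_smul, Real.norm_of_nonneg hγ]
      exact mul_le_mul_of_nonneg_left (norm_drift_le hF μ z) hγ
    rw [hX.2.2.2 m j hj ω, hZ m j hj ω, sub_sub_sub_comm]
    calc _ ≤ ‖X m j ω - Z m j ω‖ + (γ * C + γ * C) :=
          (norm_sub_le _ _).trans (add_le_add le_rfl ((norm_sub_le _ _).trans
            (add_le_add (hdrift _ _) (hdrift _ _))))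
      _ ≤ m * (2 * γ * C) + (γ * C + γ * C) := add_le_add (ih j hj ω) le_rfl
      _ = ((m + 1 : ℕ) : ℝ) * (2 * γ * C) := by push_cast; ring

theorem ensembleNorm_interacting_sub_mirrored_succ_le
    (hF : IsBoundedLipschitz C L (driftIntegrand k gk h)) [IsProbabilityMeasure ρ₀]
    (hρ₀ : MemLp id 2 ρ₀) (hγ : 0 ≤ γ) [IsProbabilityMeasure P] (hN : 0 < N)
    (hX : IsInteracting γ k gk h ρ₀ N P X) (hZ0 : ∀ j < N, ∀ ω, Z 0 j ω = X 0 j ω)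
    (hZ : ∀ n, ∀ j < N, ∀ ω, Z (n + 1) j ω =
      Z n j ω - γ • drift k gk h (mfSeq γ k gk h ρ₀ n) (Z n j ω)) (m : ℕ) :
    ensembleNorm P (Finset.range N) (fun i ω => ‖X (m + 1) i ω - Z (m + 1) i ω‖)
      ≤ (1 + 2 * γ * L) * ensembleNorm P (Finset.range N) (fun i ω => ‖X m i ω - Z m i ω‖)
        + γ * √(8 * L ^ 2 * varMeas (mfSeq γ k gk h ρ₀ m)) := by
  have := isProbabilityMeasure_mfSeq γ ρ₀ hF m
  have hZiid := isIIDSample_mirrored hF hX.isIIDSample hZ0 hZ m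
  refine ensembleNorm_step_le hF (memLp_mfSeq hF hρ₀ m) hγ hZiid (fun j hj => ?_)
    (hX.2.2.2 m) (hZ m)
  exact MemLp.of_bound ((hX.1 m j).sub (hZiid.measurable j hj)).norm.aestronglyMeasurable
    (m * (2 * γ * C)) (ae_of_all P fun ω => by
      simpa using norm_interacting_sub_mirrored_le hF hγ hN hX hZ0 hZ m j hj ω)

theorem ensembleNorm_interacting_sub_mirrored_le
    (hF : IsBoundedLipschitz C L (driftIntegrand k gk h)) [IsProbabilityMeasure ρ₀]
    (hρ₀ : MemLp id 2 ρ₀) (hγ : 0 < γ) [IsProbabilityMeasure P] (hN : 0 < N)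
    (hX : IsInteracting γ k gk h ρ₀ N P X) (hZ0 : ∀ j < N, ∀ ω, Z 0 j ω = X 0 j ω)
    (hZ : ∀ n, ∀ j < N, ∀ ω, Z (n + 1) j ω =
      Z n j ω - γ • drift k gk h (mfSeq γ k gk h ρ₀ n) (Z n j ω)) {T : ℝ} {n : ℕ}
    (hn : n * γ ≤ T) :
    ensembleNorm P (Finset.range N) (fun i ω => ‖X n i ω - Z n i ω‖)
      ≤ 2 * Real.exp (L * T) * √(varMeas ρ₀) * (Real.exp (2 * L * T) - 1) := by
  have hL := hF.nonneg
  have hT : 0 ≤ T := le_trans (by positivity) hn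
  have hV₀ := varMeas_nonneg ρ₀
  set c := 2 * Real.exp (L * T) * √(varMeas ρ₀)
  have hsource : ∀ m : ℕ, m * γ ≤ T →
      γ * √(8 * L ^ 2 * varMeas (mfSeq γ k gk h ρ₀ m)) ≤ (1 + 2 * γ * L - 1) * c := by
    intro m hm
    have hvar := varMeas_mfSeq_le_exp hF hρ₀ hγ.le hm
    have hsqrt : √(8 * L ^ 2 * varMeas (mfSeq γ k gk h ρ₀ m))
        ≤ 4 * L * Real.exp (L * T) * √(varMeas ρ₀) := by
      refine Real.sqrt_le_iff.mpr ⟨by positivity, ?_⟩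
      rw [mul_pow, Real.sq_sqrt hV₀]
      nlinarith [sq_nonneg L]
    calc _ ≤ γ * (4 * L * Real.exp (L * T) * √(varMeas ρ₀)) := by gcongr
      _ = _ := by ring
  have hzero : ensembleNorm P (Finset.range N) (fun i ω => ‖X 0 i ω - Z 0 i ω‖) = 0 := by
    rw [ensembleNorm, Finset.sum_eq_zero fun j hj => by simp [hZ0 j (Finset.mem_range.mp hj)],
      Real.sqrt_zero]
  calc _ ≤ c * ((1 + 2 * γ * L) ^ n - 1) :=
        le_mul_pow_sub_one_of_le_mul_add (u := fun m => ensembleNorm P (Finset.range N)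
          (fun i ω => ‖X m i ω - Z m i ω‖)) (by positivity) hzero.le fun m hm =>
          (ensembleNorm_interacting_sub_mirrored_succ_le hF hρ₀ hγ.le hN hX hZ0 hZ m).trans
            (add_le_add le_rfl (hsource m (le_trans (by gcongr) hn)))
    _ ≤ c * (Real.exp (2 * L * T) - 1) := by
        gcongr
        calc (1 + 2 * γ * L) ^ n ≤ Real.exp (n * (2 * γ * L)) :=
              one_add_pow_le_exp_mul (by positivity) n
          _ ≤ Real.exp (2 * L * T) := Real.exp_le_exp.mpr (by nlinarith)

end MeanFieldLimit

/-- Mean-field limit of the interacting SVGD system (Proposition 7 of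
[Korba et al.], Proposition 1 of the paper): the particles stay `O(1/√N)`
close (in `L²`) to their mirrored mean-field counterparts, uniformly on `[0,T]`. -/
theorem mean_field_limit (B BL CV M : ℝ)
    (hB : 0 < B) (hBL : 0 < BL) (hCV : 0 < CV) (hM : 0 < M) :
    ∃ A : ℝ, 0 < A ∧
      ∀ (d : ℕ), 0 < d →
      ∀ (k : Euc d → Euc d → ℝ) (gk : Euc d → Euc d → Euc d),
        KernelAssumptions B BL k gk →
      ∀ (h : Euc d → Euc d), PotGrad CV M h →
      ∀ γ : ℝ, 0 < γ →
      ∀ (ρ₀ : Measure (Euc d)), IsProbabilityMeasure ρ₀ →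
        Integrable (fun x => ‖x‖ ^ 2) ρ₀ →
      ∀ T : ℝ, 0 < T →
      ∀ N : ℕ, 2 ≤ N →
      ∀ (Ω : Type) [MeasurableSpace Ω] (P : Measure Ω) [IsProbabilityMeasure P],
      ∀ X Z : ℕ → ℕ → Ω → Euc d,
        IsInteracting γ k gk h ρ₀ N P X →
        (∀ j < N, ∀ ω, Z 0 j ω = X 0 j ω) →
        (∀ n, ∀ j < N, ∀ ω, Z (n + 1) j ω =
            Z n j ω - γ • drift k gk h (mfSeq γ k gk h ρ₀ n) (Z n j ω)) →
      ∀ n : ℕ, (n : ℝ) * γ ≤ T →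
        Real.sqrt ((1 / (N : ℝ)) * ∑ j ∈ Finset.range N, ∫ ω, ‖X n j ω - Z n j ω‖ ^ 2 ∂P) ≤
          (1 / 2) * (Real.sqrt (varMeas ρ₀) / Real.sqrt (N : ℝ)) * Real.exp (A * T) *
            (Real.exp (2 * A * T) - 1) := by
  set L := BL * (CV + 1) + B * M
  refine ⟨4 * L, by positivity, ?_⟩
  intro d _ k gk hk h hh γ hγ ρ₀ _ hρ₀ T hT N hN Ω _ P _ X Z hX hZ0 hZ n hn
  have hF := isBoundedLipschitz_driftIntegrand hBL.le hM.le hk hh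
  have hρ₀' : MemLp id 2 ρ₀ :=
    (memLp_two_iff_integrable_sq_norm aestronglyMeasurable_id).mpr hρ₀
  have he := ensembleNorm_interacting_sub_mirrored_le hF hρ₀' hγ (by omega) hX hZ0 hZ hn
  have hexp := two_mul_exp_mul_exp_two_mul_sub_one_le (mul_nonneg hF.nonneg hT.le)
  rw [mul_comm (1 / (N : ℝ)), Real.sqrt_mul (Finset.sum_nonneg fun j _ =>
    integral_nonneg fun ω => sq_nonneg _), one_div, Real.sqrt_inv]
  calc ensembleNorm P (Finset.range N) (fun i ω => ‖X n i ω - Z n i ω‖) * (√(N : ℝ))⁻¹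
      ≤ √(varMeas ρ₀) / √(N : ℝ) * (2 * Real.exp (L * T) * (Real.exp (2 * (L * T)) - 1)) := by
        rw [← mul_assoc 2 L T]
        calc _ ≤ 2 * Real.exp (L * T) * √(varMeas ρ₀) * (Real.exp (2 * L * T) - 1)
              * (√(N : ℝ))⁻¹ := by gcongr
          _ = _ := by ring
    _ ≤ √(varMeas ρ₀) / √(N : ℝ) *
        (1 / 2 * Real.exp (4 * (L * T)) * (Real.exp (8 * (L * T)) - 1)) := by gcongr
    _ = _ := by ring_nf

end
end

section
/- Let β > 0 and q ≥ 0. There exists a constant C > 0, depending only on β and q, such that for every ε ∈ (0, 1/2], setting L := ⌈log(2/ε)/(β·log 2)⌉ and N_ℓ := ⌈(L+1)^4·2^{−2βℓ}·ε^{−2}⌉ for ℓ = 0,…,L, the sum S := Σ_{ℓ=0}^{L} N_ℓ·2^{qℓ} satisfies: S ≤ C·(log(1/ε))^4·ε^{−q/β} if q > 2β; S ≤ C·(log(1/ε))^5·ε^{−2} if q = 2β; and S ≤ C·(log(1/ε))^4·ε^{−2} if q < 2β. -/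
open Finset

private lemma ml_two_le_inv {ε : ℝ} (hε0 : 0 < ε) (hε : ε ≤ 1/2) : (2:ℝ) ≤ 1/ε := by
  rw [le_div_iff₀ hε0]; linarith

private lemma ml_log2_le {ε : ℝ} (hε0 : 0 < ε) (hε : ε ≤ 1/2) :
    Real.log 2 ≤ Real.log (1/ε) :=
  Real.log_le_log two_pos (ml_two_le_inv hε0 hε)

private lemma ml_pow_L {β : ℝ} (hβ : 0 < β) {ε : ℝ} (hε0 : 0 < ε) {L : ℕ}
    (hLub : (L:ℝ) < Real.log (2/ε)/(β*Real.log 2) + 1) :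
    (2:ℝ) ^ (β * (L:ℝ)) ≤ 2 * (2:ℝ)^β / ε := by
  have hlg2 : 0 < Real.log 2 := Real.log_pos one_lt_two
  have h1 : β * (L:ℝ) ≤ Real.log (2/ε)/Real.log 2 + β := by
    have h2 := mul_le_mul_of_nonneg_left hLub.le hβ.le
    have h3 : β * (Real.log (2/ε)/(β*Real.log 2) + 1) = Real.log (2/ε)/Real.log 2 + β := by
      field_simp
    linarith
  calc (2:ℝ)^(β*(L:ℝ)) ≤ (2:ℝ)^(Real.log (2/ε)/Real.log 2 + β) :=
        Real.rpow_le_rpow_of_exponent_le one_le_two h1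
    _ = (2/ε) * 2^β := by
        rw [Real.rpow_add two_pos, Real.log_div_log,
          Real.rpow_logb two_pos (by norm_num) (by positivity)]
    _ = 2 * (2:ℝ)^β / ε := by ring

private lemma ml_L_le {β : ℝ} (hβ : 0 < β) {ε : ℝ} (hε0 : 0 < ε) (hε : ε ≤ 1/2) {L : ℕ}
    (hLub : (L:ℝ) < Real.log (2/ε)/(β*Real.log 2) + 1) :
    (L:ℝ) + 1 ≤ (2/(β*Real.log 2) + 2/Real.log 2) * Real.log (1/ε) := by
  have hlg2 : 0 < Real.log 2 := Real.log_pos one_lt_two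
  have hle := ml_log2_le hε0 hε
  have hlog : Real.log (2/ε) = Real.log 2 + Real.log (1/ε) := by
    rw [Real.log_div two_ne_zero (ne_of_gt hε0), one_div, Real.log_inv]; ring
  have h2 : Real.log (2/ε)/(β*Real.log 2) ≤ 2*Real.log (1/ε)/(β*Real.log 2) := by
    gcongr
    linarith
  have h3 : (2:ℝ) ≤ 2/Real.log 2 * Real.log (1/ε) := by
    rw [div_mul_eq_mul_div, le_div_iff₀ hlg2]; nlinarith
  have h4 : (2/(β*Real.log 2) + 2/Real.log 2) * Real.log (1/ε)
      = 2*Real.log (1/ε)/(β*Real.log 2) + 2/Real.log 2 * Real.log (1/ε) := by ring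
  linarith

private lemma ml_sum_le (β q : ℝ) (hβ : 0 < β) (hq : 0 ≤ q) (L : ℕ) (ε : ℝ) (hε0 : 0 < ε) :
    ∑ ℓ ∈ Finset.range (L+1),
        (⌈((L:ℝ)+1)^4 * (2:ℝ)^(-(2*β*(ℓ:ℝ))) * ε^(-2:ℝ)⌉₊ : ℝ) * (2:ℝ)^(q*(ℓ:ℝ))
      ≤ ((L:ℝ)+1)^4 * ε^(-2:ℝ) * (∑ ℓ ∈ Finset.range (L+1), ((2:ℝ)^(q-2*β))^ℓ)
        + ((L:ℝ)+1) * (2:ℝ)^(q*(L:ℝ)) := by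
  have h1 : ∀ ℓ ∈ Finset.range (L+1),
      (⌈((L:ℝ)+1)^4 * (2:ℝ)^(-(2*β*(ℓ:ℝ))) * ε^(-2:ℝ)⌉₊ : ℝ) * (2:ℝ)^(q*(ℓ:ℝ))
        ≤ ((L:ℝ)+1)^4 * ε^(-2:ℝ) * ((2:ℝ)^(q-2*β))^ℓ + (2:ℝ)^(q*(ℓ:ℝ)) := by
    intro ℓ hℓ
    have hx : (0:ℝ) ≤ ((L:ℝ)+1)^4 * (2:ℝ)^(-(2*β*(ℓ:ℝ))) * ε^(-2:ℝ) := by positivity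
    have hceil : (⌈((L:ℝ)+1)^4 * (2:ℝ)^(-(2*β*(ℓ:ℝ))) * ε^(-2:ℝ)⌉₊ : ℝ)
        ≤ ((L:ℝ)+1)^4 * (2:ℝ)^(-(2*β*(ℓ:ℝ))) * ε^(-2:ℝ) + 1 := (Nat.ceil_lt_add_one hx).le
    have hpow : (2:ℝ)^(-(2*β*(ℓ:ℝ))) * (2:ℝ)^(q*(ℓ:ℝ)) = ((2:ℝ)^(q-2*β))^ℓ := by
      rw [← Real.rpow_natCast ((2:ℝ)^(q-2*β)) ℓ, ← Real.rpow_mul (by norm_num : (0:ℝ) ≤ 2),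
        ← Real.rpow_add two_pos]
      ring_nf
    have h2pos : (0:ℝ) < (2:ℝ)^(q*(ℓ:ℝ)) := Real.rpow_pos_of_pos two_pos _
    calc (⌈((L:ℝ)+1)^4 * (2:ℝ)^(-(2*β*(ℓ:ℝ))) * ε^(-2:ℝ)⌉₊ : ℝ) * (2:ℝ)^(q*(ℓ:ℝ))
        ≤ (((L:ℝ)+1)^4 * (2:ℝ)^(-(2*β*(ℓ:ℝ))) * ε^(-2:ℝ) + 1) * (2:ℝ)^(q*(ℓ:ℝ)) :=
          mul_le_mul_of_nonneg_right hceil h2pos.le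
      _ = ((L:ℝ)+1)^4 * ε^(-2:ℝ) * ((2:ℝ)^(-(2*β*(ℓ:ℝ))) * (2:ℝ)^(q*(ℓ:ℝ)))
            + (2:ℝ)^(q*(ℓ:ℝ)) := by ring
      _ = ((L:ℝ)+1)^4 * ε^(-2:ℝ) * ((2:ℝ)^(q-2*β))^ℓ + (2:ℝ)^(q*(ℓ:ℝ)) := by rw [hpow]
  have h2 : ∑ ℓ ∈ Finset.range (L+1), (2:ℝ)^(q*(ℓ:ℝ)) ≤ ((L:ℝ)+1) * (2:ℝ)^(q*(L:ℝ)) := by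
    calc ∑ ℓ ∈ Finset.range (L+1), (2:ℝ)^(q*(ℓ:ℝ))
        ≤ ∑ _ℓ ∈ Finset.range (L+1), (2:ℝ)^(q*(L:ℝ)) := by
          apply Finset.sum_le_sum
          intro ℓ hℓ
          apply Real.rpow_le_rpow_of_exponent_le one_le_two
          have : (ℓ:ℝ) ≤ (L:ℝ) := by
            exact_mod_cast Nat.lt_succ_iff.mp (Finset.mem_range.mp hℓ)
          nlinarith
      _ = ((L:ℝ)+1) * (2:ℝ)^(q*(L:ℝ)) := by
          rw [Finset.sum_const, Finset.card_range, nsmul_eq_mul]; push_cast; ring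
  calc ∑ ℓ ∈ Finset.range (L+1),
        (⌈((L:ℝ)+1)^4 * (2:ℝ)^(-(2*β*(ℓ:ℝ))) * ε^(-2:ℝ)⌉₊ : ℝ) * (2:ℝ)^(q*(ℓ:ℝ))
      ≤ ∑ ℓ ∈ Finset.range (L+1),
          (((L:ℝ)+1)^4 * ε^(-2:ℝ) * ((2:ℝ)^(q-2*β))^ℓ + (2:ℝ)^(q*(ℓ:ℝ))) :=
        Finset.sum_le_sum h1
    _ = ((L:ℝ)+1)^4 * ε^(-2:ℝ) * (∑ ℓ ∈ Finset.range (L+1), ((2:ℝ)^(q-2*β))^ℓ)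
          + ∑ ℓ ∈ Finset.range (L+1), (2:ℝ)^(q*(ℓ:ℝ)) := by
        rw [Finset.sum_add_distrib, Finset.mul_sum]
    _ ≤ _ := by linarith
private lemma ml_case_lt (β q : ℝ) (hβ : 0 < β) (hq : 0 ≤ q) (hqc : q < 2*β) :
    ∃ C : ℝ, 0 < C ∧ ∀ ε : ℝ, 0 < ε → ε ≤ 1/2 → ∀ L : ℕ,
      (L:ℝ) < Real.log (2/ε)/(β*Real.log 2) + 1 →
      ∑ ℓ ∈ Finset.range (L+1),
          (⌈((L:ℝ)+1)^4 * (2:ℝ)^(-(2*β*(ℓ:ℝ))) * ε^(-2:ℝ)⌉₊ : ℝ) * (2:ℝ)^(q*(ℓ:ℝ))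
        ≤ C * (Real.log (1/ε))^4 * ε^(-2:ℝ) := by
  have hlg2 : 0 < Real.log 2 := Real.log_pos one_lt_two
  set r : ℝ := (2:ℝ)^(q-2*β) with hr
  have hr0 : 0 < r := Real.rpow_pos_of_pos two_pos _
  have hr1 : r < 1 := Real.rpow_lt_one_of_one_lt_of_neg one_lt_two (by linarith)
  have h1r : 0 < 1 - r := by linarith
  set c1 : ℝ := 2/(β*Real.log 2) + 2/Real.log 2 with hc1
  have hc1pos : 0 < c1 := by positivity
  set D : ℝ := 1/(1-r) + 4*((2:ℝ)^β)^2 with hD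
  have hDpos : 0 < D := by
    have : 0 < 1/(1-r) := by positivity
    have : (0:ℝ) < ((2:ℝ)^β)^2 := by positivity
    rw [hD]; positivity
  refine ⟨c1^4 * D, by positivity, ?_⟩
  intro ε hε0 hε L hLub
  have hεp : 0 < ε^(-2:ℝ) := Real.rpow_pos_of_pos hε0 _
  have hlogpos : 0 < Real.log (1/ε) := lt_of_lt_of_le hlg2 (ml_log2_le hε0 hε)
  have hL1 := ml_L_le hβ hε0 hε hLub
  have hpow := ml_pow_L hβ hε0 hLub
  have hL4 : (L:ℝ)+1 ≤ ((L:ℝ)+1)^4 := by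
    apply le_self_pow₀ ?_ (by norm_num)
    have : (0:ℝ) ≤ (L:ℝ) := Nat.cast_nonneg L
    linarith
  -- bound on 2^{qL}
  have hεneg2 : ε^(-2:ℝ) = (ε^2)⁻¹ := by
    rw [show ((-2:ℝ)) = -(2:ℝ) by norm_num, Real.rpow_neg hε0.le, Real.rpow_two]
  have hqL : (2:ℝ)^(q*(L:ℝ)) ≤ 4*((2:ℝ)^β)^2 * ε^(-2:ℝ) := by
    have h1 : (2:ℝ)^(q*(L:ℝ)) ≤ (2:ℝ)^(2*β*(L:ℝ)) := by
      apply Real.rpow_le_rpow_of_exponent_le one_le_two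
      have : (0:ℝ) ≤ (L:ℝ) := Nat.cast_nonneg L
      nlinarith
    have h2 : (2:ℝ)^(2*β*(L:ℝ)) = ((2:ℝ)^(β*(L:ℝ)))^2 := by
      rw [← Real.rpow_two, ← Real.rpow_mul (by norm_num : (0:ℝ) ≤ 2)]
      ring_nf
    have h3 : ((2:ℝ)^(β*(L:ℝ)))^2 ≤ (2*(2:ℝ)^β/ε)^2 := by
      apply pow_le_pow_left₀ (Real.rpow_nonneg (by norm_num) _) hpow
    have h4 : (2*(2:ℝ)^β/ε)^2 = 4*((2:ℝ)^β)^2 * (ε^2)⁻¹ := by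
      field_simp; ring
    rw [hεneg2]; rw [h2] at h1; linarith [h3, h4 ▸ h3]
  -- geometric sum bound
  have hG : ∑ ℓ ∈ Finset.range (L+1), r^ℓ ≤ 1/(1-r) := by
    rw [geom_sum_eq (ne_of_lt hr1)]
    have key : (r^(L+1) - 1)/(r-1) = (1 - r^(L+1))/(1-r) := by
      rw [← neg_div_neg_eq]; ring_nf
    rw [key, div_le_div_iff₀ h1r h1r]
    nlinarith [pow_nonneg hr0.le (L+1)]
  have step1 := ml_sum_le β q hβ hq L ε hε0
  have t1 : ((L:ℝ)+1)^4 * ε^(-2:ℝ) * (∑ ℓ ∈ Finset.range (L+1), r^ℓ)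
      ≤ ((L:ℝ)+1)^4 * ε^(-2:ℝ) * (1/(1-r)) := by
    apply mul_le_mul_of_nonneg_left hG (by positivity)
  have t2 : ((L:ℝ)+1) * (2:ℝ)^(q*(L:ℝ)) ≤ ((L:ℝ)+1)^4 * (4*((2:ℝ)^β)^2 * ε^(-2:ℝ)) := by
    apply mul_le_mul hL4 hqL (Real.rpow_pos_of_pos two_pos _).le (by positivity)
  have t3 : ((L:ℝ)+1)^4*ε^(-2:ℝ)*(1/(1-r)) + ((L:ℝ)+1)^4*(4*((2:ℝ)^β)^2*ε^(-2:ℝ))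
      = ((L:ℝ)+1)^4 * D * ε^(-2:ℝ) := by rw [hD]; ring
  have t4 : ((L:ℝ)+1)^4 ≤ c1^4 * (Real.log (1/ε))^4 := by
    calc ((L:ℝ)+1)^4 ≤ (c1*Real.log (1/ε))^4 := by
          apply pow_le_pow_left₀ (by positivity) hL1
      _ = c1^4 * (Real.log (1/ε))^4 := by ring
  have t5 : ((L:ℝ)+1)^4 * D * ε^(-2:ℝ) ≤ (c1^4 * (Real.log (1/ε))^4) * (D * ε^(-2:ℝ)) := by
    calc ((L:ℝ)+1)^4 * D * ε^(-2:ℝ) = ((L:ℝ)+1)^4 * (D * ε^(-2:ℝ)) := by ring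
      _ ≤ (c1^4 * (Real.log (1/ε))^4) * (D * ε^(-2:ℝ)) :=
        mul_le_mul_of_nonneg_right t4 (by positivity)
  calc ∑ ℓ ∈ Finset.range (L+1),
        (⌈((L:ℝ)+1)^4 * (2:ℝ)^(-(2*β*(ℓ:ℝ))) * ε^(-2:ℝ)⌉₊ : ℝ) * (2:ℝ)^(q*(ℓ:ℝ))
      ≤ ((L:ℝ)+1)^4 * ε^(-2:ℝ) * (∑ ℓ ∈ Finset.range (L+1), r^ℓ)
        + ((L:ℝ)+1) * (2:ℝ)^(q*(L:ℝ)) := step1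
    _ ≤ ((L:ℝ)+1)^4*ε^(-2:ℝ)*(1/(1-r)) + ((L:ℝ)+1)^4*(4*((2:ℝ)^β)^2*ε^(-2:ℝ)) :=
        add_le_add t1 t2
    _ = ((L:ℝ)+1)^4 * D * ε^(-2:ℝ) := t3
    _ ≤ (c1^4 * (Real.log (1/ε))^4) * (D * ε^(-2:ℝ)) := t5
    _ = c1^4 * D * (Real.log (1/ε))^4 * ε^(-2:ℝ) := by ring
private lemma ml_case_eq (β q : ℝ) (hβ : 0 < β) (hq : 0 ≤ q) (hqc : q = 2*β) :
    ∃ C : ℝ, 0 < C ∧ ∀ ε : ℝ, 0 < ε → ε ≤ 1/2 → ∀ L : ℕ,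
      (L:ℝ) < Real.log (2/ε)/(β*Real.log 2) + 1 →
      ∑ ℓ ∈ Finset.range (L+1),
          (⌈((L:ℝ)+1)^4 * (2:ℝ)^(-(2*β*(ℓ:ℝ))) * ε^(-2:ℝ)⌉₊ : ℝ) * (2:ℝ)^(q*(ℓ:ℝ))
        ≤ C * (Real.log (1/ε))^5 * ε^(-2:ℝ) := by
  subst hqc
  have hlg2 : 0 < Real.log 2 := Real.log_pos one_lt_two
  set c1 : ℝ := 2/(β*Real.log 2) + 2/Real.log 2 with hc1
  have hc1pos : 0 < c1 := by positivity
  set D : ℝ := 1 + 4*((2:ℝ)^β)^2 with hD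
  have hDpos : 0 < D := by positivity
  refine ⟨c1^5 * D, by positivity, ?_⟩
  intro ε hε0 hε L hLub
  have hεp : 0 < ε^(-2:ℝ) := Real.rpow_pos_of_pos hε0 _
  have hlogpos : 0 < Real.log (1/ε) := lt_of_lt_of_le hlg2 (ml_log2_le hε0 hε)
  have hL1 := ml_L_le hβ hε0 hε hLub
  have hpow := ml_pow_L hβ hε0 hLub
  have hLnn : (0:ℝ) ≤ (L:ℝ) := Nat.cast_nonneg L
  have hL4 : (L:ℝ)+1 ≤ ((L:ℝ)+1)^4 := le_self_pow₀ (by linarith) (by norm_num)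
  have hεneg2 : ε^(-2:ℝ) = (ε^2)⁻¹ := by
    rw [show ((-2:ℝ)) = -(2:ℝ) by norm_num, Real.rpow_neg hε0.le, Real.rpow_two]
  have hqL : (2:ℝ)^(2*β*(L:ℝ)) ≤ 4*((2:ℝ)^β)^2 * ε^(-2:ℝ) := by
    have h2 : (2:ℝ)^(2*β*(L:ℝ)) = ((2:ℝ)^(β*(L:ℝ)))^2 := by
      rw [← Real.rpow_two, ← Real.rpow_mul (by norm_num : (0:ℝ) ≤ 2)]
      ring_nf
    have h3 : ((2:ℝ)^(β*(L:ℝ)))^2 ≤ (2*(2:ℝ)^β/ε)^2 :=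
      pow_le_pow_left₀ (Real.rpow_nonneg (by norm_num) _) hpow 2
    have h4 : (2*(2:ℝ)^β/ε)^2 = 4*((2:ℝ)^β)^2 * (ε^2)⁻¹ := by
      field_simp; ring
    rw [hεneg2, h2]; linarith [h4 ▸ h3]
  have hGsum : ∑ ℓ ∈ Finset.range (L+1), ((2:ℝ)^(2*β-2*β))^ℓ = (L:ℝ)+1 := by
    simp [sub_self, Real.rpow_zero]
  have step1 := ml_sum_le β (2*β) hβ hq L ε hε0
  rw [hGsum] at step1
  have t2 : ((L:ℝ)+1) * (2:ℝ)^(2*β*(L:ℝ)) ≤ ((L:ℝ)+1)^5 * (4*((2:ℝ)^β)^2 * ε^(-2:ℝ)) := by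
    have h5 : (L:ℝ)+1 ≤ ((L:ℝ)+1)^5 := le_self_pow₀ (by linarith) (by norm_num)
    exact mul_le_mul h5 hqL (Real.rpow_pos_of_pos two_pos _).le (by positivity)
  have t1 : ((L:ℝ)+1)^4 * ε^(-2:ℝ) * ((L:ℝ)+1) = ((L:ℝ)+1)^5 * ε^(-2:ℝ) := by ring
  have t4 : ((L:ℝ)+1)^5 ≤ c1^5 * (Real.log (1/ε))^5 := by
    calc ((L:ℝ)+1)^5 ≤ (c1*Real.log (1/ε))^5 := pow_le_pow_left₀ (by positivity) hL1 5
      _ = c1^5 * (Real.log (1/ε))^5 := by ring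
  calc ∑ ℓ ∈ Finset.range (L+1),
        (⌈((L:ℝ)+1)^4 * (2:ℝ)^(-(2*β*(ℓ:ℝ))) * ε^(-2:ℝ)⌉₊ : ℝ) * (2:ℝ)^(2*β*(ℓ:ℝ))
      ≤ ((L:ℝ)+1)^4 * ε^(-2:ℝ) * ((L:ℝ)+1) + ((L:ℝ)+1) * (2:ℝ)^(2*β*(L:ℝ)) := step1
    _ ≤ ((L:ℝ)+1)^5 * ε^(-2:ℝ) + ((L:ℝ)+1)^5 * (4*((2:ℝ)^β)^2 * ε^(-2:ℝ)) :=
        add_le_add (le_of_eq t1) t2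
    _ = ((L:ℝ)+1)^5 * D * ε^(-2:ℝ) := by rw [hD]; ring
    _ ≤ (c1^5 * (Real.log (1/ε))^5) * (D * ε^(-2:ℝ)) := by
        calc ((L:ℝ)+1)^5 * D * ε^(-2:ℝ) = ((L:ℝ)+1)^5 * (D * ε^(-2:ℝ)) := by ring
          _ ≤ _ := mul_le_mul_of_nonneg_right t4 (by positivity)
    _ = c1^5 * D * (Real.log (1/ε))^5 * ε^(-2:ℝ) := by ring
private lemma ml_case_gt (β q : ℝ) (hβ : 0 < β) (hq : 0 ≤ q) (hqc : 2*β < q) :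
    ∃ C : ℝ, 0 < C ∧ ∀ ε : ℝ, 0 < ε → ε ≤ 1/2 → ∀ L : ℕ,
      (L:ℝ) < Real.log (2/ε)/(β*Real.log 2) + 1 →
      ∑ ℓ ∈ Finset.range (L+1),
          (⌈((L:ℝ)+1)^4 * (2:ℝ)^(-(2*β*(ℓ:ℝ))) * ε^(-2:ℝ)⌉₊ : ℝ) * (2:ℝ)^(q*(ℓ:ℝ))
        ≤ C * (Real.log (1/ε))^4 * ε^(-(q/β)) := by
  have hlg2 : 0 < Real.log 2 := Real.log_pos one_lt_two
  set r : ℝ := (2:ℝ)^(q-2*β) with hr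
  have hr0 : 0 < r := Real.rpow_pos_of_pos two_pos _
  have hr1 : 1 < r := by
    rw [hr]
    apply Real.one_lt_rpow_iff_of_pos two_pos |>.mpr
    exact Or.inl ⟨one_lt_two, by linarith⟩
  have hr1' : 0 < r - 1 := by linarith
  set θ : ℝ := (q-2*β)/β with hθ
  have hθ0 : 0 < θ := by rw [hθ]; exact div_pos (by linarith) hβ
  set M : ℝ := 2*((2:ℝ)^β)^2 with hM
  have hM0 : 0 < M := by positivity
  set c1 : ℝ := 2/(β*Real.log 2) + 2/Real.log 2 with hc1
  have hc1pos : 0 < c1 := by positivity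
  set D : ℝ := M^θ/(r-1) + (2*(2:ℝ)^β)^(q/β) with hD
  have hDpos : 0 < D := by
    have h1 : 0 < M^θ/(r-1) := div_pos (Real.rpow_pos_of_pos hM0 _) hr1'
    have h2 : (0:ℝ) < (2*(2:ℝ)^β)^(q/β) := Real.rpow_pos_of_pos (by positivity) _
    rw [hD]; linarith
  refine ⟨c1^4 * D, by positivity, ?_⟩
  intro ε hε0 hε L hLub
  have hεp : 0 < ε^(-2:ℝ) := Real.rpow_pos_of_pos hε0 _
  have hεq : 0 < ε^(-(q/β)) := Real.rpow_pos_of_pos hε0 _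
  have hεθ : 0 < ε^(-θ) := Real.rpow_pos_of_pos hε0 _
  have hlogpos : 0 < Real.log (1/ε) := lt_of_lt_of_le hlg2 (ml_log2_le hε0 hε)
  have hL1 := ml_L_le hβ hε0 hε hLub
  have hpow := ml_pow_L hβ hε0 hLub
  have hLnn : (0:ℝ) ≤ (L:ℝ) := Nat.cast_nonneg L
  have hL4 : (L:ℝ)+1 ≤ ((L:ℝ)+1)^4 := le_self_pow₀ (by linarith) (by norm_num)
  -- bound r^{L+1}
  have hβL1 : (2:ℝ)^(β*((L:ℝ)+1)) ≤ M/ε := by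
    have e1 : (2:ℝ)^(β*((L:ℝ)+1)) = (2:ℝ)^(β*(L:ℝ)) * (2:ℝ)^β := by
      rw [← Real.rpow_add two_pos]; ring_nf
    rw [e1]
    calc (2:ℝ)^(β*(L:ℝ)) * (2:ℝ)^β ≤ (2*(2:ℝ)^β/ε) * (2:ℝ)^β :=
          mul_le_mul_of_nonneg_right hpow (Real.rpow_nonneg (by norm_num) _)
      _ = M/ε := by rw [hM]; ring
  have hrL : r^(L+1) ≤ M^θ * ε^(-θ) := by
    have e1 : r^(L+1) = ((2:ℝ)^(β*((L:ℝ)+1)))^θ := by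
      rw [hr, ← Real.rpow_natCast ((2:ℝ)^(q-2*β)) (L+1),
        ← Real.rpow_mul (by norm_num : (0:ℝ) ≤ 2),
        ← Real.rpow_mul (by norm_num : (0:ℝ) ≤ 2)]
      congr 1
      push_cast
      rw [hθ]
      field_simp
    have e2 : ((2:ℝ)^(β*((L:ℝ)+1)))^θ ≤ (M/ε)^θ :=
      Real.rpow_le_rpow (Real.rpow_nonneg (by norm_num) _) hβL1 hθ0.le
    have e3 : (M/ε)^θ = M^θ * ε^(-θ) := by
      rw [Real.div_rpow hM0.le hε0.le, Real.rpow_neg hε0.le, div_eq_mul_inv]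
    rw [e1]; rw [e3] at e2; exact e2
  have hG : ∑ ℓ ∈ Finset.range (L+1), r^ℓ ≤ M^θ * ε^(-θ) / (r-1) := by
    rw [geom_sum_eq (ne_of_gt hr1)]
    apply (div_le_div_iff_of_pos_right hr1').mpr
    linarith [hrL]
  have step1 := ml_sum_le β q hβ hq L ε hε0
  -- second term
  have hqL : (2:ℝ)^(q*(L:ℝ)) ≤ (2*(2:ℝ)^β)^(q/β) * ε^(-(q/β)) := by
    have e1 : (2:ℝ)^(q*(L:ℝ)) = ((2:ℝ)^(β*(L:ℝ)))^(q/β) := by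
      rw [← Real.rpow_mul (by norm_num : (0:ℝ) ≤ 2)]
      congr 1
      field_simp
    have e2 : ((2:ℝ)^(β*(L:ℝ)))^(q/β) ≤ (2*(2:ℝ)^β/ε)^(q/β) :=
      Real.rpow_le_rpow (Real.rpow_nonneg (by norm_num) _) hpow (by positivity)
    have e3 : (2*(2:ℝ)^β/ε)^(q/β) = (2*(2:ℝ)^β)^(q/β) * ε^(-(q/β)) := by
      rw [Real.div_rpow (by positivity) hε0.le, Real.rpow_neg hε0.le, div_eq_mul_inv]
    rw [e1]; rw [e3] at e2; exact e2
  have hεθ2 : ε^(-2:ℝ) * ε^(-θ) = ε^(-(q/β)) := by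
    rw [← Real.rpow_add hε0]
    congr 1
    rw [hθ]
    field_simp
    ring
  have t1 : ((L:ℝ)+1)^4 * ε^(-2:ℝ) * (∑ ℓ ∈ Finset.range (L+1), r^ℓ)
      ≤ ((L:ℝ)+1)^4 * (M^θ/(r-1)) * ε^(-(q/β)) := by
    calc ((L:ℝ)+1)^4 * ε^(-2:ℝ) * (∑ ℓ ∈ Finset.range (L+1), r^ℓ)
        ≤ ((L:ℝ)+1)^4 * ε^(-2:ℝ) * (M^θ * ε^(-θ) / (r-1)) :=
          mul_le_mul_of_nonneg_left hG (by positivity)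
      _ = ((L:ℝ)+1)^4 * (M^θ/(r-1)) * (ε^(-2:ℝ) * ε^(-θ)) := by ring
      _ = ((L:ℝ)+1)^4 * (M^θ/(r-1)) * ε^(-(q/β)) := by rw [hεθ2]
  have t2 : ((L:ℝ)+1) * (2:ℝ)^(q*(L:ℝ))
      ≤ ((L:ℝ)+1)^4 * ((2*(2:ℝ)^β)^(q/β) * ε^(-(q/β))) :=
    mul_le_mul hL4 hqL (Real.rpow_pos_of_pos two_pos _).le (by positivity)
  have t4 : ((L:ℝ)+1)^4 ≤ c1^4 * (Real.log (1/ε))^4 := by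
    calc ((L:ℝ)+1)^4 ≤ (c1*Real.log (1/ε))^4 := pow_le_pow_left₀ (by positivity) hL1 4
      _ = c1^4 * (Real.log (1/ε))^4 := by ring
  calc ∑ ℓ ∈ Finset.range (L+1),
        (⌈((L:ℝ)+1)^4 * (2:ℝ)^(-(2*β*(ℓ:ℝ))) * ε^(-2:ℝ)⌉₊ : ℝ) * (2:ℝ)^(q*(ℓ:ℝ))
      ≤ ((L:ℝ)+1)^4 * ε^(-2:ℝ) * (∑ ℓ ∈ Finset.range (L+1), r^ℓ)
        + ((L:ℝ)+1) * (2:ℝ)^(q*(L:ℝ)) := step1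
    _ ≤ ((L:ℝ)+1)^4 * (M^θ/(r-1)) * ε^(-(q/β))
        + ((L:ℝ)+1)^4 * ((2*(2:ℝ)^β)^(q/β) * ε^(-(q/β))) := add_le_add t1 t2
    _ = ((L:ℝ)+1)^4 * D * ε^(-(q/β)) := by rw [hD]; ring
    _ ≤ (c1^4 * (Real.log (1/ε))^4) * (D * ε^(-(q/β))) := by
        calc ((L:ℝ)+1)^4 * D * ε^(-(q/β)) = ((L:ℝ)+1)^4 * (D * ε^(-(q/β))) := by ring
          _ ≤ _ := mul_le_mul_of_nonneg_right t4 (by positivity)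
    _ = c1^4 * D * (Real.log (1/ε))^4 * ε^(-(q/β)) := by ring
/-- Cost estimate underlying the multilevel complexity theorem: with
`L = ⌈log(2/ε)/(β log 2)⌉` and `N_ℓ = ⌈(L+1)⁴·2^{−2βℓ}·ε^{−2}⌉`, the per-step
cost `S = Σ_{ℓ=0}^{L} N_ℓ·2^{qℓ}` obeys the three-regime multilevel bounds. -/
theorem ml_cost_estimate (β q : ℝ) (hβ : 0 < β) (hq : 0 ≤ q) :
    ∃ C : ℝ, 0 < C ∧
      ∀ ε : ℝ, 0 < ε → ε ≤ 1 / 2 →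
        let L := ⌈Real.log (2 / ε) / (β * Real.log 2)⌉₊
        let N : ℕ → ℕ := fun ℓ =>
          ⌈((L : ℝ) + 1) ^ 4 * (2 : ℝ) ^ (-(2 * β * (ℓ : ℝ))) * ε ^ (-2 : ℝ)⌉₊
        let S := ∑ ℓ ∈ Finset.range (L + 1), (N ℓ : ℝ) * (2 : ℝ) ^ (q * (ℓ : ℝ))
        (2 * β < q → S ≤ C * (Real.log (1 / ε)) ^ 4 * ε ^ (-(q / β))) ∧
        (q = 2 * β → S ≤ C * (Real.log (1 / ε)) ^ 5 * ε ^ (-2 : ℝ)) ∧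
        (q < 2 * β → S ≤ C * (Real.log (1 / ε)) ^ 4 * ε ^ (-2 : ℝ)) := by
  have hub : ∀ ε : ℝ, 0 < ε → ε ≤ 1/2 →
      ((⌈Real.log (2 / ε) / (β * Real.log 2)⌉₊ : ℕ) : ℝ)
        < Real.log (2/ε)/(β*Real.log 2) + 1 := by
    intro ε hε0 hε
    apply Nat.ceil_lt_add_one
    apply div_nonneg
    · apply Real.log_nonneg
      rw [le_div_iff₀ hε0]; linarith
    · have := Real.log_pos one_lt_two
      positivity
  rcases lt_trichotomy q (2*β) with hqc | hqc | hqc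
  · obtain ⟨C, hC, hbound⟩ := ml_case_lt β q hβ hq hqc
    refine ⟨C, hC, ?_⟩
    intro ε hε0 hε L N S
    exact ⟨fun h => absurd h (by linarith), fun h => absurd h (by linarith),
      fun _ => hbound ε hε0 hε L (hub ε hε0 hε)⟩
  · obtain ⟨C, hC, hbound⟩ := ml_case_eq β q hβ hq hqc
    refine ⟨C, hC, ?_⟩
    intro ε hε0 hε L N S
    exact ⟨fun h => absurd h (by linarith), fun _ => hbound ε hε0 hε L (hub ε hε0 hε),
      fun h => absurd h (by linarith)⟩
  · obtain ⟨C, hC, hbound⟩ := ml_case_gt β q hβ hq hqc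
    refine ⟨C, hC, ?_⟩
    intro ε hε0 hε L N S
    exact ⟨fun _ => hbound ε hε0 hε L (hub ε hε0 hε), fun h => absurd h (by linarith),
      fun h => absurd h (by linarith)⟩
end

section
/- Let β > 0. There exists a constant C > 0, depending only on β, such that for every ε ∈ (0, 1/2], setting L := ⌈log(2/ε)/(β·log 2)⌉ and N_ℓ := ⌈(L+1)^4·2^{−2βℓ}·ε^{−2}⌉ for ℓ = 0,…,L, one has (L+1)·(1/√N_0 + Σ_{ℓ=1}^{L} 2^{−βℓ}/√N_ℓ) + 2^{−βL} ≤ C·ε. In particular, 2^{−βL} ≤ ε/2 and 2^{−βℓ}/√N_ℓ ≤ ε/(L+1)² for every ℓ ∈ {0,…,L}. -/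
/-- Parameter-choice estimate for the multilevel complexity theorem: with
`L = ⌈log(2/ε)/(β log 2)⌉` and `N_ℓ = ⌈(L+1)⁴·2^{−2βℓ}·ε^{−2}⌉`, the
multilevel error bound evaluates to `≤ C·ε`; in particular `2^{−βL} ≤ ε/2`
and `2^{−βℓ}/√N_ℓ ≤ ε/(L+1)²` for every `ℓ ≤ L`. -/
theorem ml_parameter_choice (β : ℝ) (hβ : 0 < β) :
    ∃ C : ℝ, 0 < C ∧
      ∀ ε : ℝ, 0 < ε → ε ≤ 1 / 2 →
        let L := ⌈Real.log (2 / ε) / (β * Real.log 2)⌉₊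
        let N : ℕ → ℕ := fun ℓ =>
          ⌈((L : ℝ) + 1) ^ 4 * (2 : ℝ) ^ (-(2 * β * (ℓ : ℝ))) * ε ^ (-2 : ℝ)⌉₊
        ((L : ℝ) + 1) * (1 / Real.sqrt (N 0) +
            ∑ ℓ ∈ Finset.Icc 1 L, (2 : ℝ) ^ (-(β * (ℓ : ℝ))) / Real.sqrt (N ℓ)) +
          (2 : ℝ) ^ (-(β * (L : ℝ))) ≤ C * ε ∧
        (2 : ℝ) ^ (-(β * (L : ℝ))) ≤ ε / 2 ∧
        ∀ ℓ ≤ L, (2 : ℝ) ^ (-(β * (ℓ : ℝ))) / Real.sqrt (N ℓ) ≤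
          ε / ((L : ℝ) + 1) ^ 2 := by
  refine ⟨2, by norm_num, ?_⟩
  intro ε hε hε2
  intro L N
  have hLpos : (0:ℝ) < (L:ℝ) + 1 := by positivity
  -- tail bound
  have hL2 : (2:ℝ) ^ (-(β * (L:ℝ))) ≤ ε / 2 := by
    have hb : 0 < β * Real.log 2 := mul_pos hβ (Real.log_pos one_lt_two)
    have h1 : Real.log (2/ε) / (β * Real.log 2) ≤ (L:ℝ) := Nat.le_ceil _
    have hlog : Real.log (2/ε) ≤ β * (L:ℝ) * Real.log 2 := by
      have := (div_le_iff₀ hb).mp h1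
      linarith [this]
    have e1 : (2:ℝ) ^ (-(β*(L:ℝ))) = Real.exp (-(β*(L:ℝ)) * Real.log 2) := by
      rw [Real.rpow_def_of_pos two_pos]; ring_nf
    have e2 : ε/2 = Real.exp (-(Real.log (2/ε))) := by
      rw [Real.exp_neg, Real.exp_log (by positivity)]
      field_simp
    rw [e1, e2]
    apply Real.exp_le_exp.mpr
    nlinarith
  -- per-level bound
  have key : ∀ ℓ : ℕ, (2:ℝ)^(-(β*(ℓ:ℝ))) / Real.sqrt (N ℓ) ≤ ε / ((L:ℝ)+1)^2 := by
    intro ℓ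
    set a : ℝ := ((L:ℝ)+1)^4 * (2:ℝ)^(-(2*β*(ℓ:ℝ))) * ε^(-2:ℝ) with ha_def
    have ha : (0:ℝ) < a := by positivity
    have hN : a ≤ (N ℓ : ℝ) := Nat.le_ceil _
    have hsq_eq : Real.sqrt a = ((L:ℝ)+1)^2 * (2:ℝ)^(-(β*(ℓ:ℝ))) / ε := by
      have hb : a = (((L:ℝ)+1)^2 * (2:ℝ)^(-(β*(ℓ:ℝ))) / ε)^2 := by
        have h2 : (2:ℝ)^(-(2*β*(ℓ:ℝ))) = ((2:ℝ)^(-(β*(ℓ:ℝ))))^2 := by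
          rw [← Real.rpow_natCast ((2:ℝ)^(-(β*(ℓ:ℝ)))) 2, ← Real.rpow_mul (by norm_num)]
          norm_num; ring_nf
        have hε' : ε^(-2:ℝ) = (ε^2)⁻¹ := by
          rw [show (-2:ℝ) = ((-2:ℤ):ℝ) by norm_num, Real.rpow_intCast]
          simp [zpow_neg]
        rw [ha_def, h2, hε', div_pow, mul_pow]
        ring
      rw [hb, Real.sqrt_sq (by positivity)]
    have hsq : ((L:ℝ)+1)^2 * (2:ℝ)^(-(β*(ℓ:ℝ))) / ε ≤ Real.sqrt (N ℓ) := by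
      rw [← hsq_eq]
      exact Real.sqrt_le_sqrt hN
    have hs0 : (0:ℝ) < ((L:ℝ)+1)^2 * (2:ℝ)^(-(β*(ℓ:ℝ))) / ε := by positivity
    have hsqpos : (0:ℝ) < Real.sqrt (N ℓ) := lt_of_lt_of_le hs0 hsq
    rw [div_le_div_iff₀ hsqpos (by positivity)]
    calc (2:ℝ)^(-(β*(ℓ:ℝ))) * ((L:ℝ)+1)^2
        = (((L:ℝ)+1)^2 * (2:ℝ)^(-(β*(ℓ:ℝ))) / ε) * ε := by field_simp
      _ ≤ Real.sqrt (N ℓ) * ε := by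
          exact mul_le_mul_of_nonneg_right hsq hε.le
      _ = ε * Real.sqrt (N ℓ) := by ring
  refine ⟨?_, hL2, fun ℓ _ => key ℓ⟩
  have h0 : 1 / Real.sqrt (N 0) ≤ ε / ((L:ℝ)+1)^2 := by
    have := key 0
    simpa using this
  have hsum : ∑ ℓ ∈ Finset.Icc 1 L, (2:ℝ)^(-(β*(ℓ:ℝ))) / Real.sqrt (N ℓ)
      ≤ (L:ℝ) * (ε / ((L:ℝ)+1)^2) := by
    calc ∑ ℓ ∈ Finset.Icc 1 L, (2:ℝ)^(-(β*(ℓ:ℝ))) / Real.sqrt (N ℓ)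
        ≤ ∑ _ℓ ∈ Finset.Icc 1 L, ε / ((L:ℝ)+1)^2 :=
          Finset.sum_le_sum fun i _ => key i
      _ = (L:ℝ) * (ε / ((L:ℝ)+1)^2) := by
          rw [Finset.sum_const, Nat.card_Icc]
          simp [nsmul_eq_mul]
  have hmain : ((L:ℝ)+1) * (1 / Real.sqrt (N 0) +
      ∑ ℓ ∈ Finset.Icc 1 L, (2:ℝ)^(-(β*(ℓ:ℝ))) / Real.sqrt (N ℓ)) ≤ ε := by
    have h1 : 1 / Real.sqrt (N 0) +
        ∑ ℓ ∈ Finset.Icc 1 L, (2:ℝ)^(-(β*(ℓ:ℝ))) / Real.sqrt (N ℓ)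
        ≤ ((L:ℝ)+1) * (ε / ((L:ℝ)+1)^2) := by
      nlinarith
    calc ((L:ℝ)+1) * (1 / Real.sqrt (N 0) +
        ∑ ℓ ∈ Finset.Icc 1 L, (2:ℝ)^(-(β*(ℓ:ℝ))) / Real.sqrt (N ℓ))
        ≤ ((L:ℝ)+1) * (((L:ℝ)+1) * (ε / ((L:ℝ)+1)^2)) :=
          mul_le_mul_of_nonneg_left h1 hLpos.le
      _ = ε := by field_simp
  linarith
end
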